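/- arXiv:1303.4030 — 8 statements merged into one kernel-verified Lean document; each statement's English description precedes it below -/
import Mathlib

section
/- Johnson's bound: Let m, k, c be positive integers and let E_1, …, E_m be finite sets such that |E_i| ≥ k for every i and |E_i ∩ E_j| ≤ c for all i ≠ j. Then |E_1 ∪ ⋯ ∪ E_m| ≥ m·k² / (m·c + k − c) (an inequality of real numbers; note m·c + k − c ≥ k ≥ 1 > 0). -/
open Finset
set_option maxHeartbeats 1000000 in

/-- Johnson's bound: if `E₁, …, E_m` are finite sets with `|Eᵢ| ≥ k` and
`|Eᵢ ∩ Eⱼ| ≤ c` for `i ≠ j`, then `|⋃ Eᵢ| ≥ m k² / (m c + k − c)`. -/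
theorem johnson_bound {α : Type*} [DecidableEq α] (m k c : ℕ)
    (hm : 0 < m) (hk : 0 < k) (hc : 0 < c)
    (E : Fin m → Finset α)
    (hcard : ∀ i, k ≤ (E i).card)
    (hint : ∀ i j, i ≠ j → ((E i) ∩ (E j)).card ≤ c) :
    ((Finset.univ.biUnion E).card : ℝ) ≥
      (m * k ^ 2 : ℝ) / ((m : ℝ) * c + k - c) := by
  classical
  set U := Finset.univ.biUnion E with hU
  set d : α → ℕ := fun x => (Finset.univ.filter fun i => x ∈ E i).card with hd
  -- sum of degrees
  have hsub : ∀ i, E i ⊆ U := fun i => subset_biUnion_of_mem E (mem_univ i)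
  have hS : ∑ x ∈ U, d x = ∑ i, (E i).card := by
    simp only [hd, card_filter]
    rw [Finset.sum_comm]
    refine Finset.sum_congr rfl fun i _ => ?_
    rw [← card_filter]
    congr 1
    exact Finset.Subset.antisymm (fun x hx => (Finset.mem_filter.mp hx).2)
      (fun x hx => Finset.mem_filter.mpr ⟨hsub i hx, hx⟩)
  -- pointwise square expansion
  have hpt : ∀ x, d x * d x = ∑ i, ∑ j, if x ∈ E i ∩ E j then 1 else 0 := by
    intro x
    simp only [hd, card_filter, Finset.sum_mul_sum]
    refine Finset.sum_congr rfl fun i _ => Finset.sum_congr rfl fun j _ => ?_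
    by_cases h1 : x ∈ E i <;> by_cases h2 : x ∈ E j <;> simp [h1, h2]
  have hQ : ∑ x ∈ U, d x * d x = ∑ i, ∑ j, (E i ∩ E j).card := by
    simp_rw [hpt]
    rw [Finset.sum_comm]
    refine Finset.sum_congr rfl fun i _ => ?_
    rw [Finset.sum_comm]
    refine Finset.sum_congr rfl fun j _ => ?_
    rw [← card_filter]
    congr 1
    exact Finset.Subset.antisymm (fun x hx => (Finset.mem_filter.mp hx).2)
      (fun x hx => Finset.mem_filter.mpr ⟨hsub i (Finset.mem_inter.mp hx).1, hx⟩)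
  have hQle : ∑ x ∈ U, d x * d x ≤ (∑ i, (E i).card) + m * (m - 1) * c := by
    rw [hQ]
    calc ∑ i, ∑ j, (E i ∩ E j).card ≤ ∑ i, ((E i).card + (m - 1) * c) := by
          refine Finset.sum_le_sum fun i _ => ?_
          rw [← Finset.add_sum_erase _ _ (mem_univ i)]
          refine add_le_add ?_ ?_
          · simp [Finset.inter_self]
          · calc ∑ j ∈ Finset.univ.erase i, (E i ∩ E j).card
                ≤ ∑ _j ∈ Finset.univ.erase i, c :=
                  Finset.sum_le_sum fun j hj => hint i j (Ne.symm (Finset.mem_erase.mp hj).1)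
              _ = (m - 1) * c := by
                  simp [Finset.card_erase_of_mem, Finset.card_univ]
      _ = (∑ i, (E i).card) + m * (m - 1) * c := by
          rw [Finset.sum_add_distrib, Finset.sum_const, Finset.card_univ]
          simp only [Fintype.card_fin, smul_eq_mul]
          ring
  -- Cauchy-Schwarz
  have hCS : ((∑ x ∈ U, d x : ℕ) : ℝ) ^ 2 ≤ (U.card : ℝ) * ((∑ x ∈ U, d x * d x : ℕ) : ℝ) := by
    push_cast
    simpa [sq] using sq_sum_le_card_mul_sum_sq (s := U) (f := fun x => (d x : ℝ))
  set S : ℝ := ((∑ i, (E i).card : ℕ) : ℝ) with hSdef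
  have hSmk : (m : ℝ) * k ≤ S := by
    rw [hSdef]
    push_cast
    calc (m : ℝ) * k = ∑ _i : Fin m, (k : ℝ) := by simp [mul_comm]
      _ ≤ ∑ i, ((E i).card : ℝ) := Finset.sum_le_sum fun i _ => by exact_mod_cast hcard i
  set A : ℝ := (m : ℝ) * (m - 1) * c with hAdef
  have hA0 : 0 ≤ A := by
    have : (1 : ℝ) ≤ m := by exact_mod_cast hm
    have : (0:ℝ) ≤ (m:ℝ) - 1 := by linarith
    positivity
  have hkey : S ^ 2 ≤ (U.card : ℝ) * (S + A) := by
    have hcast : ((∑ x ∈ U, d x * d x : ℕ) : ℝ) ≤ S + A := by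
      calc ((∑ x ∈ U, d x * d x : ℕ) : ℝ)
          ≤ (((∑ i, (E i).card) + m * (m - 1) * c : ℕ) : ℝ) := by exact_mod_cast hQle
        _ ≤ S + A := by
            rw [hSdef, hAdef]
            push_cast [Nat.cast_sub hm]
            linarith
    calc S ^ 2 = ((∑ x ∈ U, d x : ℕ) : ℝ) ^ 2 := by rw [hSdef, hS]
      _ ≤ (U.card : ℝ) * ((∑ x ∈ U, d x * d x : ℕ) : ℝ) := hCS
      _ ≤ (U.card : ℝ) * (S + A) := by
          exact mul_le_mul_of_nonneg_left hcast (by positivity)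
  -- final arithmetic
  set n : ℝ := (U.card : ℝ) with hn
  have hn0 : 0 ≤ n := by positivity
  have hmk0 : (0:ℝ) < (m:ℝ) * k := by
    have := Nat.cast_pos (α := ℝ) |>.mpr hm
    have := Nat.cast_pos (α := ℝ) |>.mpr hk
    positivity
  have hS0 : 0 < S := lt_of_lt_of_le hmk0 hSmk
  have hD : (0:ℝ) < (m : ℝ) * c + k - c := by
    have h1 : (1:ℝ) ≤ m := by exact_mod_cast hm
    have h2 : (0:ℝ) < k := by exact_mod_cast hk
    have h3 : (0:ℝ) < c := by exact_mod_cast hc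
    nlinarith
  rw [ge_iff_le, div_le_iff₀ hD]
  have hmA : (m:ℝ) * k + A = (m:ℝ) * ((m:ℝ) * c + k - c) := by
    rw [hAdef]; ring
  -- (mk)^2 ≤ n * (mk + A)
  have hSA : (0:ℝ) < S + A := by linarith
  have hfin : ((m:ℝ) * k) ^ 2 ≤ n * ((m:ℝ) * k + A) := by
    have e1 : ((m:ℝ)*k)^2 * S ≤ S^2 * ((m:ℝ)*k) := by
      nlinarith [mul_nonneg (mul_nonneg hmk0.le hS0.le) (sub_nonneg.mpr hSmk)]
    have e2 : ((m:ℝ)*k)^2 * A ≤ S^2 * A := by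
      nlinarith [mul_le_mul_of_nonneg_right (mul_le_mul hSmk hSmk hmk0.le hS0.le) hA0]
    have e3 := mul_le_mul_of_nonneg_right hkey (by linarith : (0:ℝ) ≤ (m:ℝ)*k + A)
    have h4 : ((m:ℝ)*k)^2 * (S+A) ≤ n * ((m:ℝ)*k + A) * (S+A) := by nlinarith
    exact le_of_mul_le_mul_right h4 hSA
  have hm0 : (0:ℝ) < m := by exact_mod_cast hm
  rw [hmA] at hfin
  nlinarith [hfin]
end

section
/- Vertex counting lemma: Let c ≥ 1 and q ≥ 1 be integers and let e_1, …, e_{q+2} be q + 2 finite sets, each of cardinality exactly q, such that |e_i ∩ e_j| ≤ c − 1 for all i ≠ j. Then the union V = e_1 ∪ ⋯ ∪ e_{q+2} satisfies c(c+1)·|V| ≥ (c+1)q² + (c+3)q − 2(c−1). -/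
/-!
Double counting over the degrees `d(v) = #{i | v ∈ e i}` of the vertices of `V`:
`∑ d(v) = ∑ |e i| = (q + 2) q` and
`∑ d(v)² = ∑_{i,j} |e i ∩ e j| ≤ (q + 2) q + (q + 2)(q + 1)(c - 1)`.
Since `d(v)` is an integer, `(d(v) - c)(d(v) - c - 1) ≥ 0`, and summing this over `V` gives
`c (c + 1) |V| ≥ (2c + 1) ∑ d(v) - ∑ d(v)²`, which is the claimed bound.
-/

open Finset

namespace SetFamily

variable {ι α : Type*} [DecidableEq α]

theorem sum_card_filter_mem_eq_sum_card {s : Finset ι} {V : Finset α} {g : ι → Finset α}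
    (hg : ∀ i ∈ s, g i ⊆ V) :
    ∑ v ∈ V, #{i ∈ s | v ∈ g i} = ∑ i ∈ s, #(g i) := by
  calc ∑ v ∈ V, #{i ∈ s | v ∈ g i} = ∑ i ∈ s, #{v ∈ V | v ∈ g i} :=
        sum_card_bipartiteAbove_eq_sum_card_bipartiteBelow (fun v i => v ∈ g i)
    _ = ∑ i ∈ s, #(g i) := by
        refine sum_congr rfl fun i hi => ?_
        rw [filter_mem_eq_inter, inter_eq_right.2 (hg i hi)]

variable [Fintype ι] (e : ι → Finset α)

def degree (v : α) : ℕ := #{i | v ∈ e i}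

theorem sum_degree : ∑ v ∈ univ.biUnion e, degree e v = ∑ i, #(e i) :=
  sum_card_filter_mem_eq_sum_card fun _ hi => subset_biUnion_of_mem e hi

theorem degree_mul_self (v : α) :
    degree e v * degree e v = #{p : ι × ι | v ∈ e p.1 ∩ e p.2} := by
  simp_rw [degree, ← card_product, mem_inter, ← filter_product, univ_product_univ]

theorem sum_degree_mul_self :
    ∑ v ∈ univ.biUnion e, degree e v * degree e v = ∑ i, ∑ j, #(e i ∩ e j) := by
  simp_rw [degree_mul_self, ← Fintype.sum_prod_type']
  exact sum_card_filter_mem_eq_sum_card fun p _ =>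
    inter_subset_left.trans (subset_biUnion_of_mem e (mem_univ p.1))

theorem sum_sum_card_inter_le {t : ℕ} (ht : ∀ i j, i ≠ j → #(e i ∩ e j) ≤ t) :
    ∑ i, ∑ j, #(e i ∩ e j)
      ≤ ∑ i, #(e i) + Fintype.card ι * ((Fintype.card ι - 1) * t) := by
  classical
  rw [← smul_eq_mul, ← card_univ, ← sum_const, ← sum_add_distrib]
  refine sum_le_sum fun i _ => ?_
  rw [← add_sum_erase _ _ (mem_univ i), inter_self, ← card_erase_of_mem (mem_univ i),
    ← smul_eq_mul, ← sum_const]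
  exact add_le_add_right (sum_le_sum fun j hj => ht i j (ne_of_mem_erase hj).symm) _

theorem two_mul_add_one_mul_le (c d : ℤ) : (2 * c + 1) * d ≤ c * (c + 1) + d * d := by
  rcases le_or_gt d c with h | h <;> nlinarith

theorem sum_card_sub_sum_card_inter_le (c : ℤ) :
    (2 * c + 1) * ∑ i, (#(e i) : ℤ) - ∑ i, ∑ j, (#(e i ∩ e j) : ℤ)
      ≤ c * (c + 1) * #(univ.biUnion e) := by
  have hdeg : ∑ i, (#(e i) : ℤ) = ∑ v ∈ univ.biUnion e, (degree e v : ℤ) := by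
    exact_mod_cast (sum_degree e).symm
  have hdeg2 : ∑ i, ∑ j, (#(e i ∩ e j) : ℤ)
      = ∑ v ∈ univ.biUnion e, (degree e v : ℤ) * degree e v := by
    exact_mod_cast (sum_degree_mul_self e).symm
  rw [hdeg, hdeg2, mul_sum, ← sum_sub_distrib, ← nsmul_eq_mul', ← sum_const]
  exact sum_le_sum fun v _ => by linarith [two_mul_add_one_mul_le c (degree e v)]

end SetFamily

theorem vertex_counting_lemma_general {α : Type*} [DecidableEq α] (c q : ℕ)
    (hc : 1 ≤ c)
    (e : Fin (q + 2) → Finset α)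
    (hcard : ∀ i, (e i).card = q)
    (hint : ∀ i j, i ≠ j → ((e i) ∩ (e j)).card ≤ c - 1) :
    (c : ℤ) * (c + 1) * (Finset.univ.biUnion e).card
      ≥ (c + 1) * q ^ 2 + (c + 3) * q - 2 * (c - 1) := by
  have hsum : ∑ i, (e i).card = (q + 2) * q := by simp [hcard]
  have hinter : ∑ i, ∑ j, ((e i ∩ e j).card : ℤ)
      ≤ (q + 2) * q + (q + 2) * ((q + 1) * (c - 1)) := by
    have := SetFamily.sum_sum_card_inter_le e hint
    rw [hsum, Fintype.card_fin, show q + 2 - 1 = q + 1 from rfl] at this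
    zify [hc] at this
    exact this
  have hcount := SetFamily.sum_card_sub_sum_card_inter_le e c
  rw [show ∑ i, ((e i).card : ℤ) = (q + 2) * q by exact_mod_cast hsum] at hcount
  linarith

/-- Vertex counting lemma: if `e₁, …, e_{q+2}` are `q + 2` finite sets of
cardinality `q` with pairwise intersections of size at most `c − 1`, then their
union `V` satisfies `c(c+1)·|V| ≥ (c+1)q² + (c+3)q − 2(c−1)`. -/
theorem vertex_counting_lemma {α : Type*} [DecidableEq α] (c q : ℕ)
    (hc : 1 ≤ c) (hq : 1 ≤ q)
    (e : Fin (q + 2) → Finset α)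
    (hcard : ∀ i, (e i).card = q)
    (hint : ∀ i j, i ≠ j → ((e i) ∩ (e j)).card ≤ c - 1) :
    (c : ℤ) * (c + 1) * (Finset.univ.biUnion e).card
      ≥ (c + 1) * q ^ 2 + (c + 3) * q - 2 * (c - 1) :=
  vertex_counting_lemma_general c q hc e hcard hint
end

section
/- Hall's condition for vertex-color adjacency graphs: Let c ≥ 1, q ≥ 1 and n ≥ 1 be integers with c(c+1)·n ≤ (c+1)q² + (c+3)q − 2(c−1). Let L : Fin n → Finset ℕ satisfy |L(v)| ≥ q + 1 for every v and |L(u) ∩ L(v)| ≤ c for all u ≠ v. Then Hall's condition holds in the vertex-color adjacency graph: for every subset S of Fin n, |S| ≤ |⋃_{v ∈ S} L(v)|. -/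
open Finset

lemma double_count {α β : Type*} [DecidableEq β] (T : Finset α) (A : α → Finset β)
    (V : Finset β) (hA : ∀ v ∈ T, A v ⊆ V) :
    ∑ y ∈ V, (T.filter (fun v => y ∈ A v)).card = ∑ v ∈ T, (A v).card := by
  simp only [Finset.card_filter]
  rw [Finset.sum_comm]
  refine Finset.sum_congr rfl (fun v hv => ?_)
  rw [← Finset.card_filter, Finset.filter_mem_eq_inter,
    Finset.inter_eq_right.mpr (hA v hv)]

lemma double_count_sq {α β : Type*} [DecidableEq β] (T : Finset α) (A : α → Finset β)
    (V : Finset β) (hA : ∀ v ∈ T, A v ⊆ V) :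
    ∑ y ∈ V, ((T.filter (fun v => y ∈ A v)).card) ^ 2
      = ∑ u ∈ T, ∑ v ∈ T, ((A u) ∩ (A v)).card := by
  simp only [Finset.card_filter, sq]
  have : ∀ y : β, (∑ u ∈ T, if y ∈ A u then 1 else 0) * (∑ v ∈ T, if y ∈ A v then 1 else 0)
      = ∑ u ∈ T, ∑ v ∈ T, if y ∈ A u ∩ A v then 1 else 0 := by
    intro y
    rw [Finset.sum_mul_sum]
    refine Finset.sum_congr rfl fun u _ => Finset.sum_congr rfl fun v _ => ?_
    simp [Finset.mem_inter, ite_and, mul_ite]; split <;> split <;> simp_all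
  rw [Finset.sum_congr rfl fun y _ => this y]
  rw [Finset.sum_comm]
  refine Finset.sum_congr rfl (fun u hu => ?_)
  rw [Finset.sum_comm]
  refine Finset.sum_congr rfl (fun v hv => ?_)
  rw [← Finset.card_filter, Finset.filter_mem_eq_inter,
    Finset.inter_eq_right.mpr ((Finset.inter_subset_left).trans (hA u hu))]

set_option maxHeartbeats 1000000 in
lemma key_arith (c q s d u w : ℤ) (hc : 1 ≤ c) (hq : 1 ≤ q) (hs : q + 2 ≤ s)
    (hd : d = q + 2 + u) (hu : 0 ≤ u) (hds : d ≤ s)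
    (hw1 : w * (q + 2) ≤ c * u) (hw2 : c * u < (w + 1) * (q + 2))
    (h1 : c * (c + 1) * s ≤ (c + 1) * q ^ 2 + (c + 3) * q - 2 * (c - 1)) :
    (c - 1) * d * (d - 1) < 2 * (c + w) * (d * q) - (c + w) * (c + w + 1) * (s - 2) := by
  subst hd
  have hc0 : (0:ℤ) ≤ c := by linarith
  have hq0 : (0:ℤ) ≤ q := by linarith
  have hcu0 : (0:ℤ) ≤ c * u := mul_nonneg hc0 hu
  have hw0 : (0:ℤ) ≤ w := by
    by_contra hneg
    push_neg at hneg
    have h' : (0:ℤ) ≤ (-(w+1)) * (q+2) := mul_nonneg (by linarith) (by linarith)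
    nlinarith
  set r := c * u - w * (q + 2) with hrdef
  have hr0 : (0:ℤ) ≤ r := by rw [hrdef]; linarith
  have hr1 : r ≤ q + 1 := by rw [hrdef]; linarith
  have hcq1 : (1:ℤ) ≤ c * q := by nlinarith [mul_le_mul hc hq (by norm_num : (0:ℤ) ≤ 1) hc0]
  have hc2 : (1:ℤ) ≤ c^2 := by nlinarith [mul_le_mul hc hc (by norm_num : (0:ℤ) ≤ 1) hc0]
  -- g2 piece
  have hg2 : (0:ℤ) ≤ c * (c*q^2 - c^2*q + 2*c^3 + q^2 + c*q + 4*q - 2*c + 4) := by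
    have t1 : (0:ℤ) ≤ c * (q - c)^2 := mul_nonneg hc0 (sq_nonneg _)
    have t2 : (0:ℤ) ≤ c^2*q + c^3 - 2*c := by
      have := mul_nonneg hc0 (show (0:ℤ) ≤ c*q + c^2 - 2 by linarith [hcq1, hc2])
      nlinarith [this]
    have hin : (0:ℤ) ≤ c*q^2 - c^2*q + 2*c^3 + q^2 + c*q + 4*q - 2*c + 4 := by
      nlinarith [t1, t2, sq_nonneg q, mul_nonneg hc0 hq0, hq0]
    exact mul_nonneg hc0 hin
  -- g1 piece
  have hg1 : (0:ℤ) ≤ 4*c*r + 2*c*q*r + 4*c^2 + 4*c^2*q + 2*c^2*q*r + c^2*q^2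
      - 4*c^3*r + c^3*q + c^3*q^2 + 4*c^4 - c^4*q + 4*c^5 := by
    have p1 : (0:ℤ) ≤ c * (c*q - 2*c^2)^2 := mul_nonneg hc0 (sq_nonneg _)
    have p2 : (0:ℤ) ≤ c^3 * (q + 1 - r) :=
      mul_nonneg (by positivity) (by linarith)
    have p3 : (0:ℤ) ≤ c^3 * q * (c - 1) :=
      mul_nonneg (mul_nonneg (by positivity) hq0) (by linarith)
    have p4 : (0:ℤ) ≤ c * (c^2 + 1) * (c - 1) :=
      mul_nonneg (mul_nonneg hc0 (by positivity)) (by linarith)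
    have p5 : (0:ℤ) ≤ c * q * r * (c + 1) :=
      mul_nonneg (mul_nonneg (mul_nonneg hc0 hq0) hr0) (by linarith)
    have p6 : (0:ℤ) ≤ c * r := mul_nonneg hc0 hr0
    linarith [p1, p2, p3, p4, p5, p6, mul_nonneg (mul_nonneg hc0 hc0) hq0,
      sq_nonneg (c*q), hc0]
  -- g0 piece
  have hg0 : (0:ℤ) < c*r^2 + 3*c^2*r + 2*c^2*q*r - c^3*r^2 + 2*c^3*q*r + 2*c^4
      - 3*c^4*r + 4*c^5 + 2*c^6 := by
    have q1 : (0:ℤ) ≤ c * (2*c*r - 3*c^2)^2 := mul_nonneg hc0 (sq_nonneg _)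
    have q2 : (0:ℤ) ≤ c^3 * r * (q + 1 - r) :=
      mul_nonneg (mul_nonneg (by positivity) hr0) (by linarith)
    have q3 : (0:ℤ) ≤ c^2 * r * (q + 1 - r) :=
      mul_nonneg (mul_nonneg (by positivity) hr0) (by linarith)
    have q4 : (0:ℤ) ≤ (c*r - c^2)^2 := sq_nonneg _
    have hc4 : (1:ℤ) ≤ c^4 := by nlinarith [hc2]
    have hc5 : (1:ℤ) ≤ c^5 := by nlinarith [hc2, hc4, hc0]
    have hc6 : (1:ℤ) ≤ c^6 := by nlinarith [hc2, hc4]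
    have q5 : (0:ℤ) ≤ c^2 * r^2 := by positivity
    have q6 : (0:ℤ) ≤ c^2 * r := by positivity
    have q7 : (0:ℤ) ≤ c * r^2 := by positivity
    linarith [q1, q2, q3, q4, q5, q6, q7, hc4, hc5, hc6]
  -- assembled positivity
  have hid : c^2 * (2*c*(c+1)*((c+w)*((q+2+u)*q))
        - (c+w)*(c+w+1)*((c+1)*q^2+(c+3)*q-2*(c-1)-2*(c*(c+1)))
        - c*(c+1)*((c-1)*(q+2+u)*(q+2+u-1)))
      = (c*r^2 + 3*c^2*r + 2*c^2*q*r - c^3*r^2 + 2*c^3*q*r + 2*c^4 - 3*c^4*r + 4*c^5 + 2*c^6)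
        + w * (4*c*r + 2*c*q*r + 4*c^2 + 4*c^2*q + 2*c^2*q*r + c^2*q^2
          - 4*c^3*r + c^3*q + c^3*q^2 + 4*c^4 - c^4*q + 4*c^5)
        + w^2 * (c * (c*q^2 - c^2*q + 2*c^3 + q^2 + c*q + 4*q - 2*c + 4)) := by
    rw [hrdef]; ring
  have hgsum : (0:ℤ) < (c*r^2 + 3*c^2*r + 2*c^2*q*r - c^3*r^2 + 2*c^3*q*r + 2*c^4
      - 3*c^4*r + 4*c^5 + 2*c^6)
      + w * (4*c*r + 2*c*q*r + 4*c^2 + 4*c^2*q + 2*c^2*q*r + c^2*q^2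
        - 4*c^3*r + c^3*q + c^3*q^2 + 4*c^4 - c^4*q + 4*c^5)
      + w^2 * (c * (c*q^2 - c^2*q + 2*c^3 + q^2 + c*q + 4*q - 2*c + 4)) := by
    have k1 : (0:ℤ) ≤ w * (4*c*r + 2*c*q*r + 4*c^2 + 4*c^2*q + 2*c^2*q*r + c^2*q^2
        - 4*c^3*r + c^3*q + c^3*q^2 + 4*c^4 - c^4*q + 4*c^5) := mul_nonneg hw0 hg1
    have k2 : (0:ℤ) ≤ w^2 * (c * (c*q^2 - c^2*q + 2*c^3 + q^2 + c*q + 4*q - 2*c + 4)) :=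
      mul_nonneg (sq_nonneg w) hg2
    linarith
  have hT : (0:ℤ) < 2*c*(c+1)*((c+w)*((q+2+u)*q))
      - (c+w)*(c+w+1)*((c+1)*q^2+(c+3)*q-2*(c-1)-2*(c*(c+1)))
      - c*(c+1)*((c-1)*(q+2+u)*(q+2+u-1)) := by
    by_contra hno
    push_neg at hno
    have h2 := mul_nonneg (sq_nonneg c) (neg_nonneg.mpr hno)
    linarith [hid, hgsum, h2]
  have hcw : (0:ℤ) ≤ (c+w)*(c+w+1) := mul_nonneg (by linarith) (by linarith)
  have hX : c*(c+1)*(s-2) ≤ (c+1)*q^2+(c+3)*q-2*(c-1)-2*(c*(c+1)) := by linarith [h1]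
  have h6 := mul_le_mul_of_nonneg_left hX hcw
  have h5 : c*(c+1) * ((c-1)*(q+2+u)*(q+2+u-1))
      < c*(c+1) * (2*(c+w)*((q+2+u)*q) - (c+w)*(c+w+1)*(s-2)) := by linarith [hT, h6]
  have hcc : (0:ℤ) ≤ c*(c+1) := by positivity
  exact lt_of_mul_lt_mul_left h5 hcc

set_option maxHeartbeats 2000000

/-- Hall's condition for vertex-color adjacency graphs: if `c(c+1)·n ≤
(c+1)q² + (c+3)q − 2(c−1)` and `L` is a list assignment on `Fin n` with
`|L(v)| ≥ q + 1` and `|L(u) ∩ L(v)| ≤ c` for `u ≠ v`, then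
`|S| ≤ |⋃_{v ∈ S} L(v)|` for every `S ⊆ Fin n`. -/
theorem halls_condition_vertex_color (c q n : ℕ)
    (hc : 1 ≤ c) (hq : 1 ≤ q) (hn : 1 ≤ n)
    (hcount : (c : ℤ) * (c + 1) * n ≤ (c + 1) * q ^ 2 + (c + 3) * q - 2 * (c - 1))
    (L : Fin n → Finset ℕ)
    (hcard : ∀ v, q + 1 ≤ (L v).card)
    (hint : ∀ u v, u ≠ v → ((L u) ∩ (L v)).card ≤ c) :
    ∀ S : Finset (Fin n), S.card ≤ (S.biUnion L).card := by
  intro S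
  by_contra hcon
  push_neg at hcon
  set U := S.biUnion L with hU
  set s := S.card with hscard
  set m := U.card with hmcard
  have hm : m < s := hcon
  have hS0 : 0 < s := lt_of_le_of_lt (Nat.zero_le m) hm
  obtain ⟨v0, hv0⟩ := Finset.card_pos.mp hS0
  have hLU : ∀ v ∈ S, L v ⊆ U := fun v hv => Finset.subset_biUnion_of_mem L hv
  have hqm : q + 1 ≤ m := le_trans (hcard v0) (Finset.card_le_card (hLU v0 hv0))
  have hs2 : q + 2 ≤ s := by omega
  have hsn : s ≤ n := by
    have := Finset.card_le_univ S
    simpa using this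
  -- hypothesis for s
  have h1 : (c : ℤ) * (c + 1) * s ≤ (c + 1) * q ^ 2 + (c + 3) * q - 2 * (c - 1) := by
    refine le_trans ?_ hcount
    have : (s : ℤ) ≤ n := by exact_mod_cast hsn
    have hcc : (0:ℤ) ≤ (c:ℤ) * (c+1) := by positivity
    nlinarith
  -- degrees
  have hsum : ∑ y ∈ U, (S.filter (fun v => y ∈ L v)).card = ∑ v ∈ S, (L v).card :=
    double_count S L U hLU
  have hsumge : s * (q + 1) ≤ ∑ y ∈ U, (S.filter (fun v => y ∈ L v)).card := by
    rw [hsum]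
    calc s * (q+1) = S.card • (q+1) := by simp [hscard]
    _ ≤ ∑ v ∈ S, (L v).card := Finset.card_nsmul_le_sum S _ _ (fun v _ => hcard v)
  -- max degree vertex
  have hmax : ∃ y ∈ U, s * (q + 1) ≤ (S.filter (fun v => y ∈ L v)).card * m := by
    by_contra hno
    push_neg at hno
    have hb : ∀ y ∈ U, m * (S.filter (fun v => y ∈ L v)).card + 1 ≤ s * (q+1) := by
      intro y hy
      have := hno y hy
      rw [Nat.mul_comm]
      omega
    have hsumle : ∑ y ∈ U, (m * (S.filter (fun v => y ∈ L v)).card + 1)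
        ≤ ∑ _y ∈ U, s * (q+1) := Finset.sum_le_sum hb
    rw [Finset.sum_add_distrib, ← Finset.mul_sum, Finset.sum_const, Finset.sum_const] at hsumle
    simp only [smul_eq_mul, mul_one] at hsumle
    have h2 : m * (s * (q+1)) + m ≤ m * (s * (q+1)) := by
      calc m * (s * (q+1)) + m ≤ m * (∑ y ∈ U, (S.filter (fun v => y ∈ L v)).card) + m := by
            have := Nat.mul_le_mul_left m hsumge
            omega
      _ ≤ m * (s * (q+1)) := hsumle
    omega
  obtain ⟨x, hxU, hxd⟩ := hmax
  set T := S.filter (fun v => x ∈ L v) with hT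
  set d := T.card with hdT
  have hTS : T ⊆ S := Finset.filter_subset _ _
  have hds : d ≤ s := Finset.card_le_card hTS
  have hd2 : q + 2 ≤ d := by
    by_contra hlt
    push_neg at hlt
    have : d * m ≤ (q+1) * m := Nat.mul_le_mul_right m (by omega)
    have : s * (q+1) ≤ (q+1) * m := le_trans hxd this
    nlinarith
  -- star
  set A : Fin n → Finset ℕ := fun v => (L v).erase x with hA
  set V := T.biUnion A with hV
  set M := V.card with hM
  have hAV : ∀ v ∈ T, A v ⊆ V := fun v hv => Finset.subset_biUnion_of_mem A hv
  have hVU : V ⊆ U.erase x := by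
    rw [hV]
    refine Finset.biUnion_subset.mpr (fun v hv => ?_)
    exact Finset.erase_subset_erase x (hLU v (hTS hv))
  have hMs : M + 2 ≤ s := by
    have h1' : M ≤ (U.erase x).card := Finset.card_le_card hVU
    have h2' : (U.erase x).card = m - 1 := Finset.card_erase_of_mem hxU
    omega
  -- star sums
  have hxLv : ∀ v ∈ T, x ∈ L v := fun v hv => (Finset.mem_filter.mp hv).2
  have hsumA : ∑ y ∈ V, (T.filter (fun v => y ∈ A v)).card = ∑ v ∈ T, (A v).card :=
    double_count T A V hAV
  set E := ∑ v ∈ T, (A v).card with hE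
  have hEdq : d * q ≤ E := by
    rw [hE]
    calc d * q = T.card • q := by simp [hdT]
    _ ≤ ∑ v ∈ T, (A v).card := by
        refine Finset.card_nsmul_le_sum T _ _ (fun v hv => ?_)
        have := Finset.card_erase_of_mem (hxLv v hv)
        have := hcard v
        simp only [hA]
        omega
  have hsq : ∑ y ∈ V, ((T.filter (fun v => y ∈ A v)).card) ^ 2
      = ∑ u ∈ T, ∑ v ∈ T, ((A u) ∩ (A v)).card := double_count_sq T A V hAV
  -- bound on second moment
  have hsqle : ∑ y ∈ V, ((T.filter (fun v => y ∈ A v)).card) ^ 2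
      ≤ E + (c - 1) * (d * (d-1)) := by
    rw [hsq]
    have hinner : ∀ u ∈ T, ∑ v ∈ T, ((A u) ∩ (A v)).card ≤ (A u).card + (d-1) * (c-1) := by
      intro u hu
      rw [← Finset.add_sum_erase T _ hu, Finset.inter_self]
      have : ∑ v ∈ (T.erase u), ((A u) ∩ (A v)).card ≤ (T.erase u).card • (c-1) := by
        refine Finset.sum_le_card_nsmul _ _ _ (fun v hv => ?_)
        have hvu : v ≠ u := Finset.ne_of_mem_erase hv
        have hvT : v ∈ T := Finset.mem_of_mem_erase hv
        have hxuv : x ∈ L u ∩ L v := Finset.mem_inter.mpr ⟨hxLv u hu, hxLv v hvT⟩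
        have hAuv : (A u) ∩ (A v) = (L u ∩ L v).erase x := by
          simp only [hA]
          rw [Finset.erase_inter, Finset.inter_erase, Finset.erase_idem]
        rw [hAuv, Finset.card_erase_of_mem hxuv]
        have := hint u v (fun h => hvu h.symm)
        omega
      have hce : (T.erase u).card = d - 1 := by rw [Finset.card_erase_of_mem hu, hdT]
      rw [hce] at this
      simpa [smul_eq_mul] using this
    calc ∑ u ∈ T, ∑ v ∈ T, ((A u) ∩ (A v)).card
        ≤ ∑ u ∈ T, ((A u).card + (d-1) * (c-1)) := Finset.sum_le_sum hinner
    _ = E + d * ((d-1) * (c-1)) := by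
        rw [Finset.sum_add_distrib, Finset.sum_const, hE, hdT]; simp [smul_eq_mul]
    _ ≤ E + (c-1) * (d * (d-1)) := by ring_nf; omega
  -- pointwise bound, integers
  have hkey : ∀ a : ℕ, 2 * (a:ℤ) * E - a * (a+1) * M ≤ ((c:ℤ) - 1) * d * (d - 1) := by
    intro a
    have hpt : ∀ y ∈ V, (2 * (a:ℤ) + 1) * ((T.filter (fun v => y ∈ A v)).card : ℤ) - a * (a+1)
        ≤ (((T.filter (fun v => y ∈ A v)).card : ℤ)) ^ 2 := by
      intro y hy
      set e : ℤ := ((T.filter (fun v => y ∈ A v)).card : ℤ)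
      have h0 : 0 ≤ (e - a) * (e - a - 1) := by
        rcases le_or_gt (e - a) 0 with h | h
        · nlinarith [mul_nonneg (neg_nonneg.2 h) (neg_nonneg.2 (show e - (a:ℤ) - 1 ≤ 0 by linarith))]
        · exact mul_nonneg (by linarith) (by linarith)
      nlinarith
    have hsums : ∑ y ∈ V, ((2 * (a:ℤ) + 1) * ((T.filter (fun v => y ∈ A v)).card : ℤ) - a * (a+1))
        ≤ ∑ y ∈ V, (((T.filter (fun v => y ∈ A v)).card : ℤ)) ^ 2 :=
      Finset.sum_le_sum hpt
    rw [Finset.sum_sub_distrib, ← Finset.mul_sum, Finset.sum_const] at hsums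
    have hcastsum : ∑ y ∈ V, ((T.filter (fun v => y ∈ A v)).card : ℤ) = (E : ℤ) := by
      rw [← hsumA]; push_cast; rfl
    have hcastsq : ∑ y ∈ V, (((T.filter (fun v => y ∈ A v)).card : ℤ)) ^ 2
        = ((∑ y ∈ V, ((T.filter (fun v => y ∈ A v)).card) ^ 2 : ℕ) : ℤ) := by push_cast; rfl
    rw [hcastsum, hcastsq] at hsums
    have hsqle' : ((∑ y ∈ V, ((T.filter (fun v => y ∈ A v)).card) ^ 2 : ℕ) : ℤ)
        ≤ (E : ℤ) + ((c:ℤ) - 1) * (d * (d-1)) := by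
      have := hsqle
      have hcast : ((E + (c - 1) * (d * (d-1)) : ℕ) : ℤ) = (E:ℤ) + ((c:ℤ)-1) * (d * (d-1)) := by
        push_cast [Nat.cast_sub hc, Nat.cast_sub (show 1 ≤ d by omega)]
        ring
      calc ((∑ y ∈ V, ((T.filter (fun v => y ∈ A v)).card) ^ 2 : ℕ) : ℤ)
          ≤ ((E + (c - 1) * (d * (d-1)) : ℕ) : ℤ) := by exact_mod_cast hsqle
      _ = _ := hcast
    rw [nsmul_eq_mul] at hsums
    have hdd : ((d : ℤ) - 1) = ((d - 1 : ℕ) : ℤ) := by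
      rw [Nat.cast_sub (show 1 ≤ d by omega)]; simp
    rw [hdd]
    nlinarith [hsums, hsqle']
  -- choose a
  set u' := d - (q + 2) with hu'
  set w := (c * u') / (q + 2) with hw
  have hdu : (d : ℤ) = (q : ℤ) + 2 + u' := by
    have : d = q + 2 + u' := by omega
    exact_mod_cast this
  have hw1 : (w : ℤ) * ((q:ℤ) + 2) ≤ (c : ℤ) * u' := by
    have := Nat.div_mul_le_self (c * u') (q + 2)
    exact_mod_cast this
  have hw2 : (c : ℤ) * u' < ((w : ℤ) + 1) * ((q:ℤ) + 2) := by
    have h0 : 0 < q + 2 := by omega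
    have hdm := Nat.div_add_mod (c * u') (q + 2)
    have hml := Nat.mod_lt (c * u') h0
    have h3 : ((c * u') / (q + 2) + 1) * (q + 2) = (q + 2) * ((c * u') / (q + 2)) + (q + 2) := by
      ring
    have : c * u' < ((c * u') / (q + 2) + 1) * (q + 2) := by omega
    exact_mod_cast this
  have harith := key_arith c q s d u' w (by exact_mod_cast hc) (by exact_mod_cast hq)
    (by exact_mod_cast hs2) hdu (by positivity) (by exact_mod_cast hds) hw1 hw2 h1
  have hfin := hkey (c + w)
  have hEc : (d : ℤ) * q ≤ (E : ℤ) := by exact_mod_cast hEdq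
  have hMc2 : (M : ℤ) ≤ (s : ℤ) - 2 := by
    have : (M : ℤ) + 2 ≤ s := by exact_mod_cast hMs
    linarith
  have hcw : (0:ℤ) ≤ ((c:ℤ) + w) := by positivity
  push_cast at hfin
  have hp1 : 2 * ((c:ℤ) + w) * ((d:ℤ) * q) ≤ 2 * ((c:ℤ) + w) * E :=
    mul_le_mul_of_nonneg_left hEc (by positivity)
  have hp2 : ((c:ℤ) + w) * ((c:ℤ) + w + 1) * M ≤ ((c:ℤ) + w) * ((c:ℤ) + w + 1) * ((s:ℤ) - 2) :=
    mul_le_mul_of_nonneg_left hMc2 (by positivity)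
  linarith [hfin, harith, hp1, hp2]
end

section
/- Upper bound for χ_l(K_n, c): Let c ≥ 1, q ≥ 1 and n ≥ 1 be integers with c(c+1)·n ≤ (c+1)q² + (c+3)q − 2(c−1). Then for every list assignment L : Fin n → Finset ℕ with |L(v)| = q + 1 for every vertex v and |L(u) ∩ L(v)| ≤ c for all distinct vertices u ≠ v, there exists an injective function f : Fin n → ℕ with f(v) ∈ L(v) for every v. In other words, χ_l(K_n, c) ≤ q + 1 whenever c(c+1)·n ≤ (c+1)q² + (c+3)q − 2(c−1). -/
/-!
By Hall's theorem it suffices that every set `s` of vertices sees at least `#s` colours. If not,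
the `#s * (q + 1)` incidences between `s` and fewer than `#s` colours put some colour `x` in
`q + 2` lists; deleting `x` from them leaves `q + 2` sets of size `q` with pairwise intersections
at most `c - 1` inside at most `#s - 2` colours. Summing `(e - c) * (e - c - 1) ≥ 0` over the
degrees `e` of the colours shows that such sets need at least
`(q + 2) * ((c + 1) * q - (c - 1)) / (c * (c + 1))` colours, which the bound on `n` forbids.
-/

open Finset

section Counting

variable {ι α : Type*} [DecidableEq α] (T : Finset ι) (B : ι → Finset α)

theorem sum_card_filter_mem_of_subset {W : Finset α} (hW : ∀ v ∈ T, B v ⊆ W) :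
    ∑ y ∈ W, #{v ∈ T | y ∈ B v} = ∑ v ∈ T, #(B v) := by
  refine (sum_card_bipartiteAbove_eq_sum_card_bipartiteBelow (fun v y => y ∈ B v)).symm.trans
    (sum_congr rfl fun v hv => ?_)
  rw [bipartiteAbove, filter_mem_eq_inter, inter_eq_right.2 (hW v hv)]

theorem sum_card_filter_mem_sq :
    ∑ y ∈ T.biUnion B, #{v ∈ T | y ∈ B v} ^ 2 = ∑ v ∈ T, ∑ u ∈ T, #(B v ∩ B u) := by
  have hsq : ∀ y, #{v ∈ T | y ∈ B v} ^ 2 = #{p ∈ T ×ˢ T | y ∈ B p.1 ∩ B p.2} := fun y => by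
    simp only [mem_inter]
    rw [sq, ← card_product, filter_product (fun v => y ∈ B v) (fun v => y ∈ B v)]
  simp_rw [hsq]
  rw [sum_card_filter_mem_of_subset (T ×ˢ T) (fun p => B p.1 ∩ B p.2), sum_product]
  intro p hp
  exact inter_subset_left.trans (subset_biUnion_of_mem B (mem_product.1 hp).1)

theorem sum_card_sub_sum_card_inter_le_card_biUnion (t : ℤ) :
    (2 * t + 1) * ∑ v ∈ T, (#(B v) : ℤ) - ∑ v ∈ T, ∑ u ∈ T, (#(B v ∩ B u) : ℤ)
      ≤ t * (t + 1) * #(T.biUnion B) := by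
  have hpoint : ∀ e : ℤ, (2 * t + 1) * e - e ^ 2 ≤ t * (t + 1) := fun e => by
    rcases le_or_gt e t with h | h <;> nlinarith
  have hsum := sum_card_filter_mem_of_subset T B fun v hv => subset_biUnion_of_mem B hv
  have hsq := sum_card_filter_mem_sq T B
  zify at hsum hsq
  calc _ = ∑ y ∈ T.biUnion B,
          ((2 * t + 1) * #{v ∈ T | y ∈ B v} - (#{v ∈ T | y ∈ B v} : ℤ) ^ 2) := by
        rw [← hsum, ← hsq, mul_sum, sum_sub_distrib]
    _ ≤ ∑ y ∈ T.biUnion B, t * (t + 1) := sum_le_sum fun y _ => hpoint _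
    _ = _ := by rw [sum_const, nsmul_eq_mul, mul_comm]

theorem sum_sum_card_inter_le {q : ℕ} {d : ℤ} (hB : ∀ v ∈ T, #(B v) = q)
    (hd : ∀ u ∈ T, ∀ v ∈ T, u ≠ v → (#(B u ∩ B v) : ℤ) ≤ d) :
    ∑ v ∈ T, ∑ u ∈ T, (#(B v ∩ B u) : ℤ) ≤ #T * (q + (#T - 1) * d) := by
  classical
  have hrow : ∀ v ∈ T, ∑ u ∈ T, (#(B v ∩ B u) : ℤ) ≤ q + (#T - 1) * d := fun v hv => by
    have hoff : ∑ u ∈ T.erase v, (#(B v ∩ B u) : ℤ) ≤ (#T - 1) * d := by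
      refine (sum_le_card_nsmul _ _ d fun u hu => hd v hv u (mem_of_mem_erase hu)
        (ne_of_mem_erase hu).symm).trans_eq ?_
      rw [card_erase_of_mem hv, nsmul_eq_mul, Nat.cast_pred (card_pos.2 ⟨v, hv⟩)]
    rw [← sum_erase_add _ _ hv, inter_self, hB v hv]
    linarith
  refine (sum_le_card_nsmul _ _ _ hrow).trans_eq ?_
  rw [nsmul_eq_mul]

theorem le_mul_card_biUnion_of_card_inter_le {q : ℕ} {d : ℤ}
    (hB : ∀ v ∈ T, #(B v) = q) (hd : ∀ u ∈ T, ∀ v ∈ T, u ≠ v → (#(B u ∩ B v) : ℤ) ≤ d) (t : ℤ) :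
    #T * (2 * t * q - (#T - 1) * d) ≤ t * (t + 1) * #(T.biUnion B) := by
  have hsum : ∑ v ∈ T, (#(B v) : ℤ) = #T * q := by
    rw [sum_congr rfl fun v hv => congrArg Nat.cast (hB v hv), sum_const, nsmul_eq_mul]
  have := sum_card_sub_sum_card_inter_le_card_biUnion T B t
  rw [hsum] at this
  linarith [sum_sum_card_inter_le T B hB hd]

theorem exists_lt_card_filter_mem_of_card_biUnion_lt {s : Finset ι} {L : ι → Finset α} {k : ℕ}
    (hk : 0 < k) (hL : ∀ v ∈ s, k ≤ #(L v)) (hs : #(s.biUnion L) < #s) :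
    ∃ x ∈ s.biUnion L, k < #{v ∈ s | x ∈ L v} := by
  refine exists_lt_of_sum_lt ?_
  calc ∑ _ ∈ s.biUnion L, k = #(s.biUnion L) * k := by rw [sum_const, smul_eq_mul]
    _ < #s * k := Nat.mul_lt_mul_of_pos_right hs hk
    _ ≤ ∑ v ∈ s, #(L v) := by simpa only [smul_eq_mul] using card_nsmul_le_sum _ _ _ hL
    _ = _ := (sum_card_filter_mem_of_subset s L fun v hv => subset_biUnion_of_mem L hv).symm

end Counting

theorem card_le_card_biUnion_of_card_inter_le {ι α : Type*} [DecidableEq α]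
    {s : Finset ι} {L : ι → Finset α} {c q : ℕ} (hc : 1 ≤ c)
    (hcount : (c * (c + 1) * #s : ℤ) ≤ (q + 2) * ((c + 1) * q - (c - 1)))
    (hcard : ∀ v ∈ s, #(L v) = q + 1) (hint : ∀ u ∈ s, ∀ v ∈ s, u ≠ v → #(L u ∩ L v) ≤ c) :
    #s ≤ #(s.biUnion L) := by
  by_contra! hs
  obtain ⟨x, hxW, hx⟩ := exists_lt_card_filter_mem_of_card_biUnion_lt (by omega : 0 < q + 1)
    (fun v hv => (hcard v hv).ge) hs
  obtain ⟨T, hTs, hT⟩ := exists_subset_card_eq hx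
  have hxT : ∀ v ∈ T, v ∈ s ∧ x ∈ L v := fun v hv => mem_filter.1 (hTs hv)
  set B : ι → Finset α := fun v => (L v).erase x
  have hB : ∀ v ∈ T, #(B v) = q := fun v hv => by
    rw [card_erase_of_mem (hxT v hv).2, hcard v (hxT v hv).1, Nat.add_sub_cancel]
  have hd : ∀ u ∈ T, ∀ v ∈ T, u ≠ v → (#(B u ∩ B v) : ℤ) ≤ c - 1 := fun u hu v hv huv => by
    have hsub : B u ∩ B v ⊆ (L u ∩ L v).erase x := by
      rw [erase_inter]
      exact erase_subset_erase x (inter_subset_inter_left (erase_subset x _))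
    have := (card_le_card hsub).trans_eq
      (card_erase_of_mem (mem_inter.2 ⟨(hxT u hu).2, (hxT v hv).2⟩))
    have := hint u (hxT u hu).1 v (hxT v hv).1 huv
    omega
  have hU : #(T.biUnion B) + 2 ≤ #s := by
    have hsub : T.biUnion B ⊆ (s.biUnion L).erase x :=
      biUnion_subset.2 fun v hv => erase_subset_erase x (subset_biUnion_of_mem L (hxT v hv).1)
    have := card_erase_add_one hxW
    have := card_le_card hsub
    omega
  have key := le_mul_card_biUnion_of_card_inter_le T B hB hd c
  rw [hT] at key
  push_cast at key
  have hpos : (0 : ℤ) < c * (c + 1) := by positivity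
  have hU' := mul_le_mul_of_nonneg_left (by exact_mod_cast hU : (#(T.biUnion B) : ℤ) + 2 ≤ #s)
    hpos.le
  linarith

theorem chi_list_upper_bound_general (c q n : ℕ)
    (hc : 1 ≤ c)
    (hcount : (c : ℤ) * (c + 1) * n ≤ (c + 1) * q ^ 2 + (c + 3) * q - 2 * (c - 1))
    (L : Fin n → Finset ℕ)
    (hcard : ∀ v, (L v).card = q + 1)
    (hint : ∀ u v, u ≠ v → ((L u) ∩ (L v)).card ≤ c) :
    ∃ f : Fin n → ℕ, Function.Injective f ∧ ∀ v, f v ∈ L v := by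
  refine (all_card_le_biUnion_card_iff_exists_injective L).1 fun s =>
    card_le_card_biUnion_of_card_inter_le hc ?_ (fun v _ => hcard v) fun u _ v _ => hint u v
  have hs : (#s : ℤ) ≤ n := by simpa using card_le_univ s
  calc (c * (c + 1) * #s : ℤ) ≤ c * (c + 1) * n := by gcongr
    _ ≤ _ := hcount
    _ = _ := by ring

/-- Upper bound for `χ_l(K_n, c)`: if `c(c+1)·n ≤ (c+1)q² + (c+3)q − 2(c−1)`,
then `K_n` can be properly colored from every `(q+1, c)`-list assignment,
i.e. `χ_l(K_n, c) ≤ q + 1`. -/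
theorem chi_list_upper_bound (c q n : ℕ)
    (hc : 1 ≤ c) (hq : 1 ≤ q) (hn : 1 ≤ n)
    (hcount : (c : ℤ) * (c + 1) * n ≤ (c + 1) * q ^ 2 + (c + 3) * q - 2 * (c - 1))
    (L : Fin n → Finset ℕ)
    (hcard : ∀ v, (L v).card = q + 1)
    (hint : ∀ u v, u ≠ v → ((L u) ∩ (L v)).card ≤ c) :
    ∃ f : Fin n → ℕ, Function.Injective f ∧ ∀ v, f v ∈ L v :=
  chi_list_upper_bound_general c q n hc hcount L hcard hint
end

section
/- Weaker upper bound via Johnson's bound: Let c ≥ 1, q ≥ 1 and n ≥ 1 be integers with n·(c(q+1) − 1) ≤ q²(q+2). Then for every list assignment L : Fin n → Finset ℕ with |L(v)| = q + 1 for every vertex v and |L(u) ∩ L(v)| ≤ c for all distinct vertices u ≠ v, there exists an injective function f : Fin n → ℕ with f(v) ∈ L(v) for every v. In other words, χ_l(K_n, c) ≤ q + 1 whenever n ≤ q²(q+2)/(c(q+1) − 1). -/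
set_option maxHeartbeats 1000000

theorem johnson_G (w s : ℤ) (hw : 2 ≤ w) (hs : w+1 ≤ s) (hsub : s ≤ w^2-1) :
    (w^2-1-s)*((s-1)*(s-2)) < s*w*(s*(w-2)+2) := by
  have hq : 0 < s^2 - s*(2*w+1) + 2*w^2 + 2*w - 2 := by nlinarith [sq_nonneg (2*s - 2*w - 1)]
  have h0 : (w^2-1-s)*(s-2) < w*(s*(w-2)+2) := by nlinarith [hq]
  have h1 : (w^2-1-s)*((s-1)*(s-2)) ≤ s*((w^2-1-s)*(s-2)) := by
    nlinarith [mul_nonneg (by linarith : (0:ℤ) ≤ w^2-1-s) (by linarith : (0:ℤ) ≤ s-2)]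
  calc (w^2-1-s)*((s-1)*(s-2)) ≤ s*((w^2-1-s)*(s-2)) := h1
    _ < s*(w*(s*(w-2)+2)) := by
        have := mul_lt_mul_of_pos_left h0 (by linarith : (0:ℤ) < s)
        linarith
    _ = s*w*(s*(w-2)+2) := by ring

theorem johnson_arith (c w s m d : ℤ) (hw : 2 ≤ w) (hc : 1 ≤ c) (hm : w ≤ m) (hsm : m + 1 ≤ s)
    (hd1 : 1 ≤ d) (hD : s * w ≤ d * m) (hds : d ≤ s)
    (hE : d*(w-1)^2 ≤ (m-1)*((c-1)*(d-1)+(w-1)))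
    (hF : s*(c*w-1) ≤ (w-1)^2*(w+1)) : False := by
  have hw0 : (0:ℤ) < w := by linarith
  have hs3 : w + 1 ≤ s := by linarith
  have hD' : s * w ≤ d * (s-1) := le_trans hD (by nlinarith)
  have hdw : w + 1 ≤ d := by nlinarith
  have hsub : s ≤ w^2 - 1 := by
    have h0 : s*(w-1) ≤ s*(c*w-1) := by
      nlinarith [mul_nonneg (by linarith : (0:ℤ) ≤ c-1) (by nlinarith : (0:ℤ) ≤ s*w)]
    nlinarith [h0]
  have hK1 : (w-1)*(d*(w-1) - s + 2) ≤ (c-1)*((d-1)*(s-2)) := by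
    have hX : (0:ℤ) ≤ (c-1)*(d-1)+(w-1) := by
      have := mul_nonneg (by linarith : (0:ℤ) ≤ c-1) (by linarith : (0:ℤ) ≤ d-1)
      linarith
    have h0 : (m-1) * ((c-1)*(d-1)+(w-1)) ≤ (s-2) * ((c-1)*(d-1)+(w-1)) :=
      mul_le_mul_of_nonneg_right (by linarith) hX
    nlinarith [hE, h0]
  have hK2 : (c-1)*(s*w) ≤ (w-1)*(w^2-1 - s) := by nlinarith [hF]
  have hcomb : s*w*(d*(w-1)-s+2) ≤ (w^2-1-s)*((d-1)*(s-2)) := by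
    have h1 : (s*w)*((w-1)*(d*(w-1) - s + 2)) ≤ (s*w)*((c-1)*((d-1)*(s-2))) :=
      mul_le_mul_of_nonneg_left hK1 (by nlinarith)
    have h2 : ((c-1)*(s*w))*((d-1)*(s-2)) ≤ ((w-1)*(w^2-1 - s))*((d-1)*(s-2)) :=
      mul_le_mul_of_nonneg_right hK2
        (mul_nonneg (by linarith : (0:ℤ) ≤ d-1) (by linarith : (0:ℤ) ≤ s-2))
    have h3 : (s*w)*((w-1)*(d*(w-1) - s + 2)) ≤ ((w-1)*(w^2-1 - s))*((d-1)*(s-2)) := by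
      calc _ ≤ (s*w)*((c-1)*((d-1)*(s-2))) := h1
        _ = ((c-1)*(s*w))*((d-1)*(s-2)) := by ring
        _ ≤ _ := h2
    have hW : (0:ℤ) < w - 1 := by linarith
    nlinarith [h3]
  have hG := johnson_G w s hw hs3 hsub
  rcases le_or_gt 0 (s*w*(w-1) - (w^2-1-s)*(s-2)) with hsl | hsl
  · have hmul := mul_nonneg hsl (by linarith : (0:ℤ) ≤ d - w - 1)
    nlinarith [hcomb, hmul, mul_nonneg (by linarith : (0:ℤ) ≤ w^2-1-s) (by linarith : (0:ℤ) ≤ s)]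
  · have hmul := mul_nonneg (by linarith : (0:ℤ) ≤ (w^2-1-s)*(s-2) - s*w*(w-1)) (by linarith : (0:ℤ) ≤ s - d)
    nlinarith [hcomb, hmul, hG]

/-- double counting: sum over ground set of degrees = sum of set sizes -/
theorem sum_card_filter_eq {α β : Type*} [DecidableEq α] [DecidableEq β]
    (S : Finset α) (U : Finset β) (B : α → Finset β) (h : ∀ v ∈ S, B v ⊆ U) :
    ∑ y ∈ U, (S.filter (fun v => y ∈ B v)).card = ∑ v ∈ S, (B v).card := by
  simp_rw [Finset.card_filter]
  rw [Finset.sum_comm]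
  refine Finset.sum_congr rfl fun v hv => ?_
  rw [← Finset.card_filter]
  rw [Finset.filter_mem_eq_inter, Finset.inter_eq_right.mpr (h v hv)]

/-- double counting for second moment -/
theorem sum_sq_card_filter_eq {α β : Type*} [DecidableEq α] [DecidableEq β]
    (T : Finset α) (U : Finset β) (B : α → Finset β) (h : ∀ v ∈ T, B v ⊆ U) :
    ∑ y ∈ U, ((T.filter (fun v => y ∈ B v)).card)^2
      = ∑ u ∈ T, ∑ v ∈ T, (B u ∩ B v).card := by
  have step : ∀ y ∈ U, ((T.filter (fun v => y ∈ B v)).card)^2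
      = ∑ u ∈ T, ∑ v ∈ T, (if y ∈ B u ∧ y ∈ B v then 1 else 0) := by
    intro y _
    rw [sq, Finset.card_filter, Finset.sum_mul_sum]
    refine Finset.sum_congr rfl fun u _ => Finset.sum_congr rfl fun v _ => ?_
    split_ifs with h1 h2 h3 <;> simp_all
  rw [Finset.sum_congr rfl step, Finset.sum_comm]
  refine Finset.sum_congr rfl fun u hu => ?_
  rw [Finset.sum_comm]
  refine Finset.sum_congr rfl fun v hv => ?_
  have : ∀ y, (y ∈ B u ∧ y ∈ B v) ↔ y ∈ B u ∩ B v := by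
    intro y; simp [Finset.mem_inter]
  simp_rw [this]
  rw [← Finset.card_filter, Finset.filter_mem_eq_inter,
    Finset.inter_eq_right.mpr (le_trans (Finset.inter_subset_left) (h u hu))]

/-- Weaker upper bound via Johnson's bound: if `n·(c(q+1) − 1) ≤ q²(q+2)`,
then `K_n` can be properly colored from every `(q+1, c)`-list assignment,
i.e. `χ_l(K_n, c) ≤ q + 1` whenever `n ≤ q²(q+2)/(c(q+1) − 1)`. -/
theorem chi_list_upper_bound_johnson (c q n : ℕ)
    (hc : 1 ≤ c) (hq : 1 ≤ q) (hn : 1 ≤ n)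
    (hcount : n * (c * (q + 1) - 1) ≤ q ^ 2 * (q + 2))
    (L : Fin n → Finset ℕ)
    (hcard : ∀ v, (L v).card = q + 1)
    (hint : ∀ u v, u ≠ v → ((L u) ∩ (L v)).card ≤ c) :
    ∃ f : Fin n → ℕ, Function.Injective f ∧ ∀ v, f v ∈ L v := by
  classical
  rw [← Finset.all_card_le_biUnion_card_iff_exists_injective]
  intro S
  by_contra hlt
  push_neg at hlt
  set U : Finset ℕ := S.biUnion L with hU
  set s := S.card with hs
  set m := U.card with hm
  have hms : m + 1 ≤ s := hlt
  have hS0 : S.Nonempty := Finset.card_pos.mp (by omega)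
  obtain ⟨v₀, hv₀⟩ := hS0
  have hLU : ∀ v ∈ S, L v ⊆ U := fun v hv => Finset.subset_biUnion_of_mem L hv
  have hmw : q + 1 ≤ m := by
    have := Finset.card_le_card (hLU v₀ hv₀)
    rwa [hcard v₀] at this
  -- first moment
  have hsum : ∑ y ∈ U, (S.filter (fun v => y ∈ L v)).card = s * (q+1) := by
    rw [sum_card_filter_eq S U L hLU]
    simp [hcard, hs, mul_comm]
  -- max degree vertex
  have hU0 : U.Nonempty := Finset.card_pos.mp (by omega)
  obtain ⟨x, hxU, hxmax⟩ := Finset.exists_max_image U (fun y => (S.filter (fun v => y ∈ L v)).card) hU0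
  set T := S.filter (fun v => x ∈ L v) with hT
  set d := T.card with hd
  have hDm : s * (q+1) ≤ d * m := by
    calc s * (q+1) = ∑ y ∈ U, (S.filter (fun v => y ∈ L v)).card := hsum.symm
      _ ≤ ∑ _y ∈ U, d := Finset.sum_le_sum (fun y hy => hxmax y hy)
      _ = m * d := by rw [Finset.sum_const, smul_eq_mul]
      _ = d * m := mul_comm _ _
  have hds : d ≤ s := Finset.card_filter_le _ _
  have hd1 : 1 ≤ d := by
    rw [hU] at hxU
    obtain ⟨v, hvS, hvx⟩ := Finset.mem_biUnion.mp hxU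
    have : v ∈ T := Finset.mem_filter.mpr ⟨hvS, hvx⟩
    exact Finset.card_pos.mpr ⟨v, this⟩
  -- second level
  set U' := U.erase x with hU'
  have hxLv : ∀ v ∈ T, x ∈ L v := fun v hv => (Finset.mem_filter.mp hv).2
  have hTS : ∀ v ∈ T, v ∈ S := fun v hv => (Finset.mem_filter.mp hv).1
  have hBU : ∀ v ∈ T, (L v).erase x ⊆ U' :=
    fun v hv => Finset.erase_subset_erase x (hLU v (hTS v hv))
  have hBcard : ∀ v ∈ T, ((L v).erase x).card = q := by
    intro v hv
    rw [Finset.card_erase_of_mem (hxLv v hv), hcard]; omega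
  -- first moment at level 2
  have hesum : ∑ y ∈ U', (T.filter (fun v => y ∈ (L v).erase x)).card = d * q := by
    rw [sum_card_filter_eq T U' (fun v => (L v).erase x) hBU]
    rw [Finset.sum_congr rfl hBcard, Finset.sum_const, smul_eq_mul]
  -- second moment at level 2
  have hesq : ∑ y ∈ U', ((T.filter (fun v => y ∈ (L v).erase x)).card)^2
      ≤ d * q + (c-1) * (d * (d-1)) := by
    rw [sum_sq_card_filter_eq T U' (fun v => (L v).erase x) hBU]
    have hbound : ∀ u ∈ T, ∑ v ∈ T, ((L u).erase x ∩ (L v).erase x).card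
        ≤ q + (c-1)*(d-1) := by
      intro u hu
      rw [← Finset.add_sum_erase T _ hu]
      have h1 : ((L u).erase x ∩ (L u).erase x).card = q := by
        rw [Finset.inter_self]; exact hBcard u hu
      have h2 : ∑ v ∈ T.erase u, ((L u).erase x ∩ (L v).erase x).card ≤ (d-1) * (c-1) := by
        have : ∀ v ∈ T.erase u, ((L u).erase x ∩ (L v).erase x).card ≤ c - 1 := by
          intro v hv
          have hvu : v ≠ u := Finset.ne_of_mem_erase hv
          have hvT : v ∈ T := Finset.mem_of_mem_erase hv
          have hsub : (L u).erase x ∩ (L v).erase x ⊆ (L u ∩ L v).erase x := by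
            intro y hy
            rw [Finset.mem_inter] at hy
            rw [Finset.mem_erase]
            exact ⟨(Finset.mem_erase.mp hy.1).1,
              Finset.mem_inter.mpr ⟨(Finset.mem_erase.mp hy.1).2, (Finset.mem_erase.mp hy.2).2⟩⟩
          have hcx : ((L u ∩ L v).erase x).card = (L u ∩ L v).card - 1 :=
            Finset.card_erase_of_mem (Finset.mem_inter.mpr ⟨hxLv u hu, hxLv v hvT⟩)
          calc ((L u).erase x ∩ (L v).erase x).card ≤ ((L u ∩ L v).erase x).card :=
                Finset.card_le_card hsub
            _ = (L u ∩ L v).card - 1 := hcx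
            _ ≤ c - 1 := Nat.sub_le_sub_right (hint u v (Ne.symm hvu)) 1
        calc ∑ v ∈ T.erase u, ((L u).erase x ∩ (L v).erase x).card
            ≤ (T.erase u).card * (c-1) := by
              rw [← smul_eq_mul]
              exact Finset.sum_le_card_nsmul _ _ _ this
          _ = (d-1) * (c-1) := by rw [Finset.card_erase_of_mem hu, ← hd]
      calc ((L u).erase x ∩ (L u).erase x).card
            + ∑ v ∈ T.erase u, ((L u).erase x ∩ (L v).erase x).card
          ≤ q + (d-1)*(c-1) := by rw [h1]; exact Nat.add_le_add_left h2 q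
        _ = q + (c-1)*(d-1) := by rw [mul_comm]
    calc ∑ u ∈ T, ∑ v ∈ T, ((L u).erase x ∩ (L v).erase x).card
        ≤ T.card * (q + (c-1)*(d-1)) := by
          rw [← smul_eq_mul]
          exact Finset.sum_le_card_nsmul _ _ _ hbound
      _ = d * q + (c-1) * (d * (d-1)) := by
          rw [← hd, mul_add, mul_left_comm]
  -- Cauchy-Schwarz
  have hCS : (d * q)^2 ≤ (m-1) * (d * q + (c-1) * (d * (d-1))) := by
    have h1 : (∑ y ∈ U', (T.filter (fun v => y ∈ (L v).erase x)).card)^2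
        ≤ U'.card * ∑ y ∈ U', ((T.filter (fun v => y ∈ (L v).erase x)).card)^2 :=
      sq_sum_le_card_mul_sum_sq
    rw [hesum] at h1
    have h2 : U'.card = m - 1 := by rw [hU', Finset.card_erase_of_mem hxU, ← hm]
    rw [h2] at h1
    exact le_trans h1 (Nat.mul_le_mul_left _ hesq)
  -- cast to ℤ and conclude
  have hsn : s ≤ n := by
    have := Finset.card_le_univ S
    simpa [hs] using this
  have hcq1 : 1 ≤ c * (q+1) := Nat.one_le_iff_ne_zero.mpr (Nat.mul_ne_zero (by omega) (by omega))
  have hFnat : s * (c * (q+1) - 1) ≤ q^2 * (q+2) :=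
    le_trans (Nat.mul_le_mul_right _ hsn) hcount
  have hm1 : 1 ≤ m := by omega
  refine johnson_arith (c:ℤ) ((q:ℤ)+1) (s:ℤ) (m:ℤ) (d:ℤ) (by push_cast; omega)
    (by exact_mod_cast hc) (by exact_mod_cast hmw) (by exact_mod_cast hms)
    (by exact_mod_cast hd1) (by exact_mod_cast hDm) (by exact_mod_cast hds) ?_ ?_
  · -- hE
    have hcast : ((d * q)^2 : ℤ) ≤ ((m:ℤ)-1) * ((d:ℤ) * q + ((c:ℤ)-1) * ((d:ℤ) * ((d:ℤ)-1))) := by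
      have := hCS
      zify [hm1, hc, hd1] at this
      convert this using 2 <;> push_cast <;> ring
    have hdiv : (d:ℤ) * ((d:ℤ) * (q:ℤ)^2) ≤ (d:ℤ) * (((m:ℤ)-1) * (((c:ℤ)-1)*((d:ℤ)-1) + (q:ℤ))) := by
      nlinarith [hcast]
    have hd0 : (0:ℤ) < d := by exact_mod_cast hd1
    have := le_of_mul_le_mul_left hdiv hd0
    calc (d:ℤ) * (((q:ℤ)+1)-1)^2 = (d:ℤ) * (q:ℤ)^2 := by ring
      _ ≤ ((m:ℤ)-1) * (((c:ℤ)-1)*((d:ℤ)-1) + (q:ℤ)) := this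
      _ = ((m:ℤ)-1) * (((c:ℤ)-1)*((d:ℤ)-1) + (((q:ℤ)+1)-1)) := by ring
  · -- hF
    have : ((s:ℤ)) * ((c:ℤ) * ((q:ℤ)+1) - 1) ≤ (q:ℤ)^2 * ((q:ℤ)+2) := by
      have := hFnat
      zify [hcq1] at this
      convert this using 2 <;> push_cast <;> ring
    calc (s:ℤ) * ((c:ℤ)*((q:ℤ)+1) - 1) ≤ (q:ℤ)^2 * ((q:ℤ)+2) := this
      _ = (((q:ℤ)+1)-1)^2 * (((q:ℤ)+1)+1) := by ring
end

section
/- Main theorem, part (ii): Let q be a prime power and let c be a positive integer such that c < q − 1 and c divides q − 1. Then for every integer n satisfying (q² − 1)/c + 2 ≤ n (equivalently c·n ≥ q² − 1 + 2c) and c(c+1)·n ≤ (c+1)q² + (c+3)q − 2(c−1), we have χ_l(K_n, c) = q + 1. -/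
/-!
Upper bound: if Hall's condition fails for a `(q+1, c)`-assignment, some colour `x` lies in
`q + 2` lists. Deleting `x` leaves `q + 2` sets of size `q` pairwise meeting in at most `c - 1`
points, and summing `(d - c)(d - c - 1) ≥ 0` over the multiplicities `d` of their points shows
that their union has at least `n` colours, whereas it lies inside the deficient union minus `x`.

Lower bound: let `H ≤ 𝔽_q^×` have order `c` and act on `𝔽_q²` by scalars; there are
`(q² - 1)/c` nonzero orbits. For a representative `a` of each nonzero orbit, the orbits met by the
line `a·x = 1` form a list of size `q`; two more lists consist of the zero orbit and the orbits on
`c` lines through the origin, with disjoint sets of slopes. These `(q² - 1)/c + 2` lists pairwise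
share at most `c` colours, but only `(q² - 1)/c + 1` colours occur, so they have no injective
colouring; disjoint fresh lists pad them to `n` vertices.
-/

/-- `χ_l(K_n, c)`: the least `k` such that the complete graph `K_n` admits a
proper coloring from every `(k, c)`-list assignment. -/
noncomputable def chiListKn (n c : ℕ) : ℕ :=
  sInf {k : ℕ | ∀ L : Fin n → Finset ℕ,
    (∀ v, (L v).card = k) →
    (∀ u v, u ≠ v → ((L u) ∩ (L v)).card ≤ c) →
    ∃ f : Fin n → ℕ, Function.Injective f ∧ ∀ v, f v ∈ L v}

open Finset Function

section ListAssignment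

variable {ι ι' α β : Type*}

def IsListAssignment [DecidableEq α] (k c : ℕ) (L : ι → Finset α) : Prop :=
  (∀ v, #(L v) = k) ∧ ∀ u v, u ≠ v → #(L u ∩ L v) ≤ c

def ListColorable (L : ι → Finset α) : Prop :=
  ∃ f : ι → α, Injective f ∧ ∀ v, f v ∈ L v

lemma IsListAssignment.comp [DecidableEq α] {k c : ℕ} {L : ι → Finset α}
    (hL : IsListAssignment k c L) {e : ι' → ι} (he : e.Injective) :
    IsListAssignment k c (L ∘ e) :=
  ⟨fun v => hL.1 (e v), fun _ _ huv => hL.2 _ _ (he.ne huv)⟩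

lemma IsListAssignment.map [DecidableEq α] [DecidableEq β] {k c : ℕ} {L : ι → Finset α}
    (hL : IsListAssignment k c L) (g : α ↪ β) :
    IsListAssignment k c fun v => (L v).map g :=
  ⟨fun v => by rw [card_map, hL.1],
    fun u v huv => by rw [← map_inter, card_map]; exact hL.2 u v huv⟩

lemma ListColorable.comp {L : ι → Finset α} (hL : ListColorable L) {e : ι' → ι}
    (he : e.Injective) : ListColorable (L ∘ e) :=
  let ⟨f, hf, hfL⟩ := hL
  ⟨f ∘ e, hf.comp he, fun v => hfL (e v)⟩

lemma ListColorable.of_map {L : ι → Finset α} {g : α ↪ β}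
    (hL : ListColorable fun v => (L v).map g) : ListColorable L := by
  obtain ⟨f, hf, hfL⟩ := hL
  choose f' hf'L hf' using fun v => mem_map.mp (hfL v)
  exact ⟨f', fun u v huv => hf (by rw [← hf' u, ← hf' v, huv]), hf'L⟩

lemma ListColorable.card_le [Finite α] {L : ι → Finset α} (hL : ListColorable L) :
    Nat.card ι ≤ Nat.card α :=
  let ⟨_, hf, _⟩ := hL
  Nat.card_le_card_of_injective _ hf

lemma ListColorable.of_forall_of_le [DecidableEq α] {k k' c : ℕ} (hk : k ≤ k')
    (h : ∀ L : ι → Finset α, IsListAssignment k c L → ListColorable L)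
    {L : ι → Finset α} (hL : IsListAssignment k' c L) : ListColorable L := by
  choose M hML hM using fun v => exists_subset_card_eq ((hL.1 v).symm ▸ hk : k ≤ #(L v))
  obtain ⟨f, hf, hfM⟩ := h M
    ⟨hM, fun u v huv =>
      (card_le_card (inter_subset_inter (hML u) (hML v))).trans (hL.2 u v huv)⟩
  exact ⟨f, hf, fun v => hML v (hfM v)⟩

def extendFresh (k : ℕ) (B : ι → Finset α) (ι' : Type*) :
    ι ⊕ ι' → Finset (α ⊕ ι' × Fin k) :=
  Sum.elim (fun v => (B v).map .inl) fun w => (univ.map (.sectR w (Fin k))).map .inr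

lemma isListAssignment_extendFresh [DecidableEq α] [DecidableEq ι'] {k c : ℕ}
    {B : ι → Finset α} (hB : IsListAssignment k c B) :
    IsListAssignment k c (extendFresh k B ι') := by
  refine ⟨?_, ?_⟩
  · rintro (v | w) <;> simp [extendFresh, hB.1]
  · rintro (v | w) (v' | w') h
    · simpa [extendFresh, ← map_inter] using hB.2 v v' (by simpa using h)
    · simp [extendFresh, disjoint_iff_inter_eq_empty.mp (disjoint_map_inl_map_inr _ _)]
    · simp [extendFresh, disjoint_iff_inter_eq_empty.mp (disjoint_map_inl_map_inr _ _).symm]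
    · have hww : w ≠ w' := fun hw => h (congrArg _ hw)
      have : Disjoint (univ.map (.sectR w (Fin k))) (univ.map (.sectR w' (Fin k))) := by
        simp [disjoint_left, hww.symm]
      simp [extendFresh, ← map_inter, disjoint_iff_inter_eq_empty.mp this]

lemma ListColorable.of_extendFresh {k : ℕ} {B : ι → Finset α}
    (h : ListColorable (extendFresh k B ι')) : ListColorable B :=
  ListColorable.of_map (g := .inl) (h.comp Sum.inl_injective)

lemma exists_fin_not_listColorable [Fintype ι] [Finite α] [DecidableEq α] {k c n : ℕ}
    {B : ι → Finset α} (hB : IsListAssignment k c B) (hα : Nat.card α < Fintype.card ι)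
    (hn : Fintype.card ι ≤ n) :
    ∃ L : Fin n → Finset ℕ, IsListAssignment k c L ∧ ¬ListColorable L := by
  let σ : Fin n ≃ ι ⊕ Fin (n - Fintype.card ι) := Fintype.equivOfCardEq (by simp; omega)
  obtain ⟨g, hg⟩ := exists_injective_nat (α ⊕ Fin (n - Fintype.card ι) × Fin k)
  refine ⟨fun v => (extendFresh k B _ (σ v)).map ⟨g, hg⟩,
    ((isListAssignment_extendFresh hB).comp σ.injective).map _, fun hL => ?_⟩
  have hcol : ListColorable B := by
    refine ListColorable.of_extendFresh (k := k) (ι' := Fin (n - Fintype.card ι)) ?_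
    simpa [comp_def] using hL.of_map.comp σ.symm.injective
  exact hα.not_ge (Nat.card_eq_fintype_card (α := ι) ▸ hcol.card_le)

end ListAssignment

lemma chiListKn_eq_succ {n c k : ℕ}
    (hsucc : ∀ L : Fin n → Finset ℕ, IsListAssignment (k + 1) c L → ListColorable L)
    (hk : ∃ L : Fin n → Finset ℕ, IsListAssignment k c L ∧ ¬ListColorable L) :
    chiListKn n c = k + 1 := by
  have hS : chiListKn n c =
      sInf {k | ∀ L : Fin n → Finset ℕ, IsListAssignment k c L → ListColorable L} := by
    simp only [chiListKn, IsListAssignment, ListColorable, and_imp]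
  rw [hS]
  refine le_antisymm (Nat.sInf_le hsucc) (le_csInf ⟨_, hsucc⟩ fun b hb => ?_)
  by_contra! hbk
  obtain ⟨L, hL, hnot⟩ := hk
  exact hnot (ListColorable.of_forall_of_le (Nat.le_of_lt_succ hbk) hb hL)

section Counting

variable {ι α : Type*} [DecidableEq α]

lemma exists_lt_card_filter_mem {k : ℕ} (hk : 0 < k) {L : ι → Finset α}
    (hL : ∀ v, #(L v) = k) {s : Finset ι} (hs : #(s.biUnion L) < #s) :
    ∃ x, k < #{v ∈ s | x ∈ L v} := by
  by_contra! h
  have hdeg : #s * k ≤ #(s.biUnion L) * k :=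
    card_mul_le_card_mul (fun v x => x ∈ L v)
      (fun v hv => by
        rw [bipartiteAbove, filter_mem_eq_inter, inter_eq_right.mpr (subset_biUnion_of_mem L hv),
          hL])
      (fun x _ => h x)
  exact hs.not_ge (Nat.le_of_mul_le_mul_right hdeg hk)

lemma sum_card_filter_mem (T : Finset ι) (M : ι → Finset α) :
    ∑ y ∈ T.biUnion M, #{v ∈ T | y ∈ M v} = ∑ v ∈ T, #(M v) := by
  refine (sum_card_bipartiteAbove_eq_sum_card_bipartiteBelow (fun v y => y ∈ M v)).symm.trans
    (sum_congr rfl fun v hv => ?_)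
  rw [bipartiteAbove, filter_mem_eq_inter, inter_eq_right.mpr (subset_biUnion_of_mem M hv)]

lemma sum_sq_card_filter_mem (T : Finset ι) (M : ι → Finset α) :
    ∑ y ∈ T.biUnion M, #{v ∈ T | y ∈ M v} ^ 2 = ∑ v ∈ T, ∑ w ∈ T, #(M v ∩ M w) :=
  calc ∑ y ∈ T.biUnion M, #{v ∈ T | y ∈ M v} ^ 2
      = ∑ y ∈ T.biUnion M, #{p ∈ T ×ˢ T | y ∈ M p.1 ∧ y ∈ M p.2} :=
        sum_congr rfl fun y _ => by rw [filter_product (p := (y ∈ M ·)) (q := (y ∈ M ·)),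
          card_product, sq]
    _ = ∑ p ∈ T ×ˢ T, #{y ∈ T.biUnion M | y ∈ M p.1 ∧ y ∈ M p.2} :=
        (sum_card_bipartiteAbove_eq_sum_card_bipartiteBelow _).symm
    _ = ∑ p ∈ T ×ˢ T, #(M p.1 ∩ M p.2) := sum_congr rfl fun p hp => congrArg card <| by
        ext y
        simp only [mem_filter, mem_inter, and_iff_right_iff_imp]
        exact fun h => mem_biUnion.mpr ⟨p.1, (mem_product.mp hp).1, h.1⟩
    _ = ∑ v ∈ T, ∑ w ∈ T, #(M v ∩ M w) := sum_product _ _ _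

-- Sum `(d - t) (d - t - 1) ≥ 0` over the numbers `d` of sets containing each point.
lemma le_mul_card_biUnion (T : Finset ι) (M : ι → Finset α) {q : ℕ} {l : ℤ}
    (hM : ∀ v ∈ T, #(M v) = q)
    (hMM : ∀ v ∈ T, ∀ w ∈ T, v ≠ w → (#(M v ∩ M w) : ℤ) ≤ l) (t : ℤ) :
    2 * t * #T * q - #T * (#T - 1) * l ≤ t * (t + 1) * #(T.biUnion M) := by
  classical
  set d : α → ℤ := fun y => #{v ∈ T | y ∈ M v}
  have hsum : ∑ y ∈ T.biUnion M, d y = #T * q := by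
    simp only [d]
    exact_mod_cast (sum_card_filter_mem T M).trans
      (by rw [sum_congr rfl hM, sum_const, smul_eq_mul])
  have hrow : ∀ v ∈ T, ∑ w ∈ T, (#(M v ∩ M w) : ℤ) ≤ q + (#T - 1) * l := by
    intro v hv
    rw [← add_sum_erase _ _ hv, inter_self, hM v hv]
    gcongr
    refine (sum_le_card_nsmul _ _ l fun w hw =>
      hMM v hv w (mem_of_mem_erase hw) (ne_of_mem_erase hw).symm).trans ?_
    rw [card_erase_of_mem hv, nsmul_eq_mul, Nat.cast_sub (card_pos.mpr ⟨v, hv⟩)]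
    simp
  have hsq : ∑ y ∈ T.biUnion M, d y ^ 2 ≤ #T * q + #T * (#T - 1) * l := by
    have hexpand :
        ∑ y ∈ T.biUnion M, d y ^ 2 = ∑ v ∈ T, ∑ w ∈ T, (#(M v ∩ M w) : ℤ) := by
      simp only [d]
      exact_mod_cast sum_sq_card_filter_mem T M
    refine hexpand.trans_le <| (sum_le_sum hrow).trans_eq ?_
    rw [sum_const, nsmul_eq_mul]
    ring
  have htangent : ∀ y ∈ T.biUnion M, (2 * t + 1) * d y - t * (t + 1) ≤ d y ^ 2 :=
    fun y _ => by nlinarith [Int.le_self_sq (d y - t)]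
  have := sum_le_sum htangent
  rw [sum_sub_distrib, ← mul_sum, hsum, sum_const, nsmul_eq_mul] at this
  linarith

end Counting

theorem listColorable_of_card_le {ι α : Type*} [Fintype ι] [DecidableEq α] {q c : ℕ}
    {L : ι → Finset α} (hL : IsListAssignment (q + 1) c L)
    (hcard : (c : ℤ) * (c + 1) * Fintype.card ι ≤
      (c + 1) * q ^ 2 + (c + 3) * q - 2 * (c - 1)) :
    ListColorable L := by
  refine (all_card_le_biUnion_card_iff_exists_injective L).mp fun s => ?_
  by_contra! hs
  obtain ⟨x, hx⟩ := exists_lt_card_filter_mem q.succ_pos hL.1 hs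
  obtain ⟨T, hTs, hT⟩ := exists_subset_card_eq hx
  have hxT : ∀ v ∈ T, v ∈ s ∧ x ∈ L v := fun v hv => mem_filter.mp (hTs hv)
  have hM : ∀ v ∈ T, #((L v).erase x) = q := fun v hv => by
    rw [card_erase_of_mem (hxT v hv).2, hL.1]; rfl
  have hMM : ∀ v ∈ T, ∀ w ∈ T, v ≠ w →
      (#((L v).erase x ∩ (L w).erase x) : ℤ) ≤ c - 1 :=
    fun v hv w hw hvw => by
      have := card_erase_add_one (mem_inter.mpr ⟨(hxT v hv).2, (hxT w hw).2⟩)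
      have := hL.2 v w hvw
      rw [erase_inter, inter_erase, erase_idem]
      omega
  set U := T.biUnion fun v => (L v).erase x
  have hsecond := le_mul_card_biUnion T (fun v => (L v).erase x) hM hMM c
  rw [hT] at hsecond
  push_cast at hsecond
  have hU : #U + 2 ≤ Fintype.card ι := by
    have hsub : U ⊆ (s.biUnion L).erase x :=
      biUnion_subset.mpr fun v hv => erase_subset_erase x (subset_biUnion_of_mem L (hxT v hv).1)
    obtain ⟨v, hv⟩ : T.Nonempty := card_pos.mp (by omega)
    have := card_erase_add_one (mem_biUnion.mpr ⟨v, (hxT v hv).1, (hxT v hv).2⟩)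
    have := card_le_card hsub
    have := card_le_univ s
    omega
  have hchain : (c : ℤ) * (c + 1) * Fintype.card ι ≤ c * (c + 1) * #U :=
    hcard.trans (by linarith)
  obtain rfl | hc := c.eq_zero_or_pos
  · push_cast at hsecond
    nlinarith
  · have := le_of_mul_le_mul_left hchain (by positivity)
    omega

section OrbitCount

variable {G β : Type*} [Group G] [Finite G] [MulAction G β]
  [DecidableEq (MulAction.orbitRel.Quotient G β)]

lemma card_image_orbitRel_mk_mul (s : Finset β) (hs : ∀ g : G, ∀ x ∈ s, g • x ∈ s)
    (hfree : ∀ g : G, ∀ x ∈ s, g • x = x → g = 1) :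
    #(s.image (Quotient.mk'' : β → MulAction.orbitRel.Quotient G β)) * Nat.card G = #s := by
  have := Fintype.ofFinite G
  rw [card_eq_sum_card_image (Quotient.mk'' : β → MulAction.orbitRel.Quotient G β) s,
    Nat.card_eq_fintype_card, ← smul_eq_mul, ← sum_const]
  refine sum_congr rfl fun ω hω => ?_
  obtain ⟨x, hx, rfl⟩ := mem_image.mp hω
  have hinj : Injective (· • x : G → β) := fun g g' hgg' => by
    have := hfree (g'⁻¹ * g) x hx (by simp only [mul_smul] at hgg' ⊢; rw [hgg', inv_smul_smul])
    exact (inv_mul_eq_one.mp this).symm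
  have hfiber : {y ∈ s | (Quotient.mk'' y : MulAction.orbitRel.Quotient G β) = Quotient.mk'' x}
      = univ.map ⟨_, hinj⟩ := by
    ext y
    simp only [mem_filter, mem_map, mem_univ, true_and, Embedding.coeFn_mk, Quotient.eq'',
      MulAction.orbitRel_apply, MulAction.mem_orbit_iff]
    exact ⟨fun h => h.2, fun ⟨g, hg⟩ => ⟨hg ▸ hs g x hx, g, hg⟩⟩
  rw [hfiber, card_map, card_univ]

end OrbitCount

lemma exists_pairwise_disjoint_card_eq {α : Type*} [Fintype α] {m c : ℕ}
    (h : m * c ≤ Fintype.card α) :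
    ∃ E : Fin m → Finset α, (∀ i, #(E i) = c) ∧ Pairwise (Disjoint on E) := by
  obtain ⟨g⟩ :=
    Embedding.nonempty_of_card_le (α := Fin m × Fin c) (β := α) (by simpa using h)
  refine ⟨fun i => univ.map ((Embedding.sectR i (Fin c)).trans g), fun i => by simp,
    fun i j hij => ?_⟩
  simp [onFun, disjoint_left, hij.symm]

lemma IsCyclic.exists_subgroup_natCard_eq {G : Type*} [Group G] [Finite G] [IsCyclic G] {d : ℕ}
    (hd : d ∣ Nat.card G) : ∃ H : Subgroup G, Nat.card H = d := by
  obtain ⟨g, hg⟩ := IsCyclic.exists_ofOrder_eq_natCard (α := G)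
  refine ⟨Subgroup.zpowers (g ^ (Nat.card G / d)), ?_⟩
  rw [Nat.card_zpowers, ← hg, orderOf_pow_orderOf_div (hg ▸ Nat.card_pos.ne') (hg ▸ hd)]

lemma exists_field_card_eq {q : ℕ} (hq : IsPrimePow q) :
    ∃ (F : Type) (_ : Field F) (_ : Fintype F), Fintype.card F = q := by
  obtain ⟨p, k, hp, hk, rfl⟩ := hq
  have := Fact.mk (Nat.prime_iff.mpr hp)
  have := Fintype.ofFinite (GaloisField p k)
  exact ⟨GaloisField p k, inferInstance, inferInstance,
    by rw [← Nat.card_eq_fintype_card, GaloisField.card p k hk.ne']⟩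

section Construction

variable {F : Type*} [Field F] [Fintype F] [DecidableEq F]

def affineLine (a : F × F) : Finset (F × F) := {x | a.1 * x.1 + a.2 * x.2 = 1}

@[simp]
lemma mem_affineLine {a x : F × F} : x ∈ affineLine a ↔ a.1 * x.1 + a.2 * x.2 = 1 := by
  simp [affineLine]

lemma card_affineLine {a : F × F} (ha : a ≠ 0) : #(affineLine a) = Fintype.card F := by
  by_cases ha₂ : a.2 = 0
  · have ha₁ : a.1 ≠ 0 := fun h => ha (Prod.ext h ha₂)
    have : affineLine a = univ.image fun t => (a.1⁻¹, t) := by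
      ext x
      simp only [mem_affineLine, ha₂, zero_mul, add_zero, mem_image, mem_univ, true_and]
      refine ⟨fun hx => ⟨x.2, Prod.ext (eq_inv_of_mul_eq_one_right hx).symm rfl⟩, ?_⟩
      rintro ⟨t, rfl⟩
      exact mul_inv_cancel₀ ha₁
    rw [this, card_image_of_injective _ fun s t h => (Prod.ext_iff.mp h).2, card_univ]
  · have : affineLine a = univ.image fun t => (t, (1 - a.1 * t) / a.2) := by
      ext x
      simp only [mem_affineLine, mem_image, mem_univ, true_and]
      refine ⟨fun hx => ⟨x.1, Prod.ext rfl ?_⟩, ?_⟩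
      · field_simp
        linear_combination -hx
      · rintro ⟨t, rfl⟩
        field_simp
        ring
    rw [this, card_image_of_injective _ fun s t h => (Prod.ext_iff.mp h).1, card_univ]

-- With `D = det (x, y)`, the line `a·z = 1` gives `x - y = D (a₂, -a₁)`, so `D ≠ 0` when
-- `x ≠ y`; then `(a - b)·x = (a - b)·y = 0` forces `a = b`.
lemma card_affineLine_inter_le {a b : F × F} (hab : a ≠ b) :
    #(affineLine a ∩ affineLine b) ≤ 1 := by
  refine card_le_one.mpr fun x hx y hy => ?_
  simp only [mem_inter, mem_affineLine] at hx hy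
  by_contra hxy
  have hD : x.1 * y.2 - x.2 * y.1 ≠ 0 := fun hD => hxy <| Prod.ext
    (by linear_combination y.1 * hx.1 - x.1 * hy.1 + a.2 * hD)
    (by linear_combination y.2 * hx.1 - x.2 * hy.1 - a.1 * hD)
  exact hab <| Prod.ext
    (mul_right_cancel₀ hD (by linear_combination y.2 * (hx.1 - hx.2) - x.2 * (hy.1 - hy.2)))
    (mul_right_cancel₀ hD (by linear_combination x.1 * (hy.1 - hy.2) - y.1 * (hx.1 - hx.2)))

lemma smul_mem_affineLine {u : Fˣ} {a x : F × F} :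
    u • x ∈ affineLine a ↔ x ∈ affineLine (u • a) := by
  simp only [mem_affineLine, Prod.smul_fst, Prod.smul_snd, Units.smul_def, smul_eq_mul]
  ring_nf

def slopeSet (E : Finset F) : Finset (F × F) := {x | x.1 ≠ 0 ∧ x.2 / x.1 ∈ E}

@[simp]
lemma mem_slopeSet {E : Finset F} {x : F × F} :
    x ∈ slopeSet E ↔ x.1 ≠ 0 ∧ x.2 / x.1 ∈ E := by
  simp [slopeSet]

lemma smul_mem_slopeSet {E : Finset F} {u : Fˣ} {x : F × F} :
    u • x ∈ slopeSet E ↔ x ∈ slopeSet E := by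
  simp [Units.smul_def, mul_div_mul_left]

lemma card_slopeSet (E : Finset F) : #(slopeSet E) = (Fintype.card F - 1) * #E := by
  have : slopeSet E = ((univ.erase 0) ×ˢ E).image fun p => (p.1, p.1 * p.2) := by
    ext x
    simp only [mem_slopeSet, mem_image, mem_product, mem_erase, mem_univ, and_true, Prod.exists]
    refine ⟨fun hx => ⟨x.1, x.2 / x.1, hx, Prod.ext rfl (mul_div_cancel₀ _ hx.1)⟩, ?_⟩
    rintro ⟨t, e, ⟨ht, he⟩, rfl⟩
    simpa [ht] using he
  rw [this, card_image_of_injOn, card_product, card_erase_of_mem (mem_univ _), card_univ]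
  rintro ⟨t, e⟩ hte ⟨t', e'⟩ hte' h
  simp only [coe_product, Set.mem_prod, mem_coe, mem_erase] at hte hte'
  simp only [Prod.mk.injEq] at h ⊢
  exact ⟨h.1, mul_left_cancel₀ hte.1.1 (h.1 ▸ h.2)⟩

lemma disjoint_slopeSet {E E' : Finset F} (hEE' : Disjoint E E') :
    Disjoint (slopeSet E) (slopeSet E') :=
  disjoint_left.mpr fun _ hx hx' =>
    disjoint_left.mp hEE' (mem_slopeSet.mp hx).2 (mem_slopeSet.mp hx').2

lemma card_slopeSet_inter_affineLine_le (E : Finset F) (a : F × F) :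
    #(slopeSet E ∩ affineLine a) ≤ #E := by
  refine card_le_card_of_injOn (fun x => x.2 / x.1)
    (fun _ hx => (mem_slopeSet.mp (mem_inter.mp hx).1).2) ?_
  intro x hx y hy hxy
  simp only [coe_inter, Set.mem_inter_iff, mem_coe, mem_slopeSet, mem_affineLine] at hx hy hxy
  obtain ⟨s, hsx, hsy⟩ : ∃ s, x.2 = s * x.1 ∧ y.2 = s * y.1 :=
    ⟨_, (div_mul_cancel₀ _ hx.1.1).symm, by rw [hxy]; exact (div_mul_cancel₀ _ hy.1.1).symm⟩
  have hK : (a.1 + a.2 * s) * x.1 = 1 := by linear_combination hx.2 - a.2 * hsx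
  have h1 : x.1 = y.1 := mul_left_cancel₀ (left_ne_zero_of_mul_eq_one hK)
    (by linear_combination hK - hy.2 + a.2 * hsy)
  exact Prod.ext h1 (by rw [hsx, hsy, h1])

variable (H : Subgroup Fˣ) [DecidableEq (MulAction.orbitRel.Quotient H (F × F))]

local notation "𝒪" => MulAction.orbitRel.Quotient H (F × F)

omit [Fintype F] [DecidableEq F] [DecidableEq 𝒪] in
lemma orbitRel_mk_eq_iff {x y : F × F} :
    (Quotient.mk'' x : 𝒪) = Quotient.mk'' y ↔ ∃ h : H, h • y = x := by
  rw [Quotient.eq'', MulAction.orbitRel_apply, MulAction.mem_orbit_iff]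

omit [Fintype F] [DecidableEq F] [DecidableEq 𝒪] in
lemma orbitRel_mk_eq_zero_iff {x : F × F} :
    (Quotient.mk'' x : 𝒪) = Quotient.mk'' 0 ↔ x = 0 := by
  simp [orbitRel_mk_eq_iff, eq_comm]

omit [Fintype F] [DecidableEq F] [DecidableEq 𝒪] in
lemma eq_one_of_smul_eq_self {h : H} {x : F × F} (hx : x ≠ 0) (hhx : h • x = x) : h = 1 := by
  refine Subtype.ext (Units.ext ?_)
  rw [Prod.ext_iff] at hhx
  by_cases hx₁ : x.1 = 0
  · exact (mul_eq_right₀ fun hx₂ => hx (Prod.ext hx₁ hx₂)).mp hhx.2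
  · exact (mul_eq_right₀ hx₁).mp hhx.1

def lineBlock (a : F × F) : Finset 𝒪 := (affineLine a).image Quotient.mk''

def slopeBlock (E : Finset F) : Finset 𝒪 :=
  insert (Quotient.mk'' 0) ((slopeSet E).image Quotient.mk'')

lemma card_lineBlock {a : F × F} (ha : a ≠ 0) : #(lineBlock H a) = Fintype.card F := by
  rw [lineBlock, card_image_of_injOn, card_affineLine ha]
  intro x hx y hy hxy
  obtain ⟨h, rfl⟩ := (orbitRel_mk_eq_iff H).mp hxy.symm
  have hx' := mem_affineLine.mp (mem_coe.mp hx)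
  have hy' := mem_affineLine.mp (mem_coe.mp hy)
  have hh : h = 1 := Subtype.ext <| Units.ext <| by
    simp only [Subgroup.smul_def, Prod.smul_fst, Prod.smul_snd, Units.smul_def, smul_eq_mul] at hy'
    simp only [OneMemClass.coe_one, Units.val_one]
    linear_combination hy' - ((h : Fˣ) : F) * hx'
  rw [hh, one_smul]

lemma card_slopeBlock {E : Finset F} (hE : #E = Nat.card H) :
    #(slopeBlock H E) = Fintype.card F := by
  have hcount := card_image_orbitRel_mk_mul (G := H) (slopeSet E)
    (fun h x hx => smul_mem_slopeSet.mpr hx)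
    (fun h x hx => eq_one_of_smul_eq_self H fun hx0 => by simp [hx0] at hx)
  rw [card_slopeSet, hE] at hcount
  have hq : 0 < Fintype.card F := Fintype.card_pos
  rw [slopeBlock, card_insert_of_notMem, Nat.eq_of_mul_eq_mul_right Nat.card_pos hcount]
  · omega
  · simp only [mem_image, orbitRel_mk_eq_zero_iff, not_exists, not_and]
    rintro x hx rfl
    simp at hx

lemma card_lineBlock_inter_le {a b : F × F} (hab : ∀ h : H, h • b ≠ a) :
    #(lineBlock H a ∩ lineBlock H b) ≤ Nat.card H := by
  have := Fintype.ofFinite H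
  have hsub : lineBlock H a ∩ lineBlock H b ⊆
      univ.biUnion fun h : H => (affineLine a ∩ affineLine (h • b)).image Quotient.mk'' := by
    intro z hz
    obtain ⟨⟨x, hx, rfl⟩, y, hy, hyx⟩ :=
      And.imp mem_image.mp mem_image.mp (mem_inter.mp hz)
    obtain ⟨h, rfl⟩ := (orbitRel_mk_eq_iff H).mp hyx
    exact mem_biUnion.mpr ⟨h, mem_univ _,
      mem_image_of_mem _ (mem_inter.mpr ⟨hx, smul_mem_affineLine.mp hy⟩)⟩
  calc #(lineBlock H a ∩ lineBlock H b)
      ≤ #(univ : Finset H) * 1 := (card_le_card hsub).trans <| card_biUnion_le_card_mul _ _ _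
        fun h _ => card_image_le.trans (card_affineLine_inter_le (hab h).symm)
    _ = Nat.card H := by rw [mul_one, card_univ, Nat.card_eq_fintype_card]

lemma card_slopeBlock_inter_lineBlock_le (E : Finset F) (a : F × F) :
    #(slopeBlock H E ∩ lineBlock H a) ≤ #E := by
  have hsub :
      slopeBlock H E ∩ lineBlock H a ⊆ (slopeSet E ∩ affineLine a).image Quotient.mk'' := by
    intro z hz
    obtain ⟨hzE, x, hx, rfl⟩ := And.imp_right mem_image.mp (mem_inter.mp hz)
    rcases mem_insert.mp hzE with h0 | hzE
    · rw [orbitRel_mk_eq_zero_iff] at h0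
      simp [h0] at hx
    obtain ⟨y, hy, hyx⟩ := mem_image.mp hzE
    obtain ⟨h, rfl⟩ := (orbitRel_mk_eq_iff H).mp hyx
    exact mem_image_of_mem _ (mem_inter.mpr ⟨smul_mem_slopeSet.mp hy, hx⟩)
  exact (card_le_card hsub).trans (card_image_le.trans (card_slopeSet_inter_affineLine_le E a))

lemma card_slopeBlock_inter_le {E E' : Finset F} (hEE' : Disjoint E E') :
    #(slopeBlock H E ∩ slopeBlock H E') ≤ 1 := by
  refine card_le_one.mpr fun z hz z' hz' => ?_
  suffices ∀ z ∈ slopeBlock H E ∩ slopeBlock H E', z = Quotient.mk'' 0 by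
    rw [this z hz, this z' hz']
  intro z hz
  obtain ⟨hzE, hzE'⟩ := mem_inter.mp hz
  rcases mem_insert.mp hzE with h0 | hzE
  · exact h0
  rcases mem_insert.mp hzE' with h0 | hzE'
  · exact h0
  obtain ⟨x, hx, rfl⟩ := mem_image.mp hzE
  obtain ⟨y, hy, hyx⟩ := mem_image.mp hzE'
  obtain ⟨h, rfl⟩ := (orbitRel_mk_eq_iff H).mp hyx
  exact absurd (smul_mem_slopeSet.mp hy) (disjoint_left.mp (disjoint_slopeSet hEE') hx)

def nonzeroOrbits : Finset 𝒪 := (univ.erase 0).image Quotient.mk''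

lemma card_nonzeroOrbits_mul : #(nonzeroOrbits H) * Nat.card H = Fintype.card F ^ 2 - 1 := by
  rw [nonzeroOrbits, card_image_orbitRel_mk_mul, card_erase_of_mem (mem_univ _), card_univ,
    Fintype.card_prod, sq]
  · exact fun h x hx =>
      mem_erase.mpr ⟨(smul_ne_zero_iff_ne h).mpr (ne_of_mem_erase hx), mem_univ _⟩
  · exact fun h x hx => eq_one_of_smul_eq_self H (ne_of_mem_erase hx)

lemma natCard_orbitRel_quotient_le : Nat.card 𝒪 ≤ #(nonzeroOrbits H) + 1 := by
  have := Fintype.ofFinite 𝒪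
  rw [Nat.card_eq_fintype_card, ← card_univ]
  refine (card_le_card fun ω _ => ?_).trans (card_insert_le (Quotient.mk'' 0) _)
  obtain ⟨x, rfl⟩ := Quotient.mk''_surjective ω
  by_cases hx : x = 0
  · exact hx ▸ mem_insert_self _ _
  · exact mem_insert_of_mem (mem_image_of_mem _ (mem_erase.mpr ⟨hx, mem_univ _⟩))

lemma out_ne_zero_of_mem_nonzeroOrbits {ω : 𝒪} (hω : ω ∈ nonzeroOrbits H) :
    ω.out ≠ 0 := by
  obtain ⟨x, hx, rfl⟩ := mem_image.mp hω
  intro h0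
  have : (Quotient.mk'' (Quotient.mk'' x : 𝒪).out : 𝒪) = Quotient.mk'' 0 := by rw [h0]
  rw [Quotient.out_eq', orbitRel_mk_eq_zero_iff] at this
  exact ne_of_mem_erase hx this

noncomputable def blockAssignment {J : Type*} (E : J → Finset F) :
    nonzeroOrbits H ⊕ J → Finset 𝒪 :=
  Sum.elim (fun ω => lineBlock H (ω : 𝒪).out) fun j => slopeBlock H (E j)

lemma isListAssignment_blockAssignment {J : Type*} {E : J → Finset F}
    (hE : ∀ j, #(E j) = Nat.card H) (hdisj : Pairwise (Disjoint on E)) :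
    IsListAssignment (Fintype.card F) (Nat.card H) (blockAssignment H E) := by
  refine ⟨?_, ?_⟩
  · rintro (ω | j)
    · exact card_lineBlock H (out_ne_zero_of_mem_nonzeroOrbits H ω.2)
    · exact card_slopeBlock H (hE j)
  · rintro (ω | j) (ω' | j') hne
    · refine card_lineBlock_inter_le H fun h hh => hne ?_
      have := (orbitRel_mk_eq_iff H).mpr ⟨h, hh⟩
      rw [Quotient.out_eq', Quotient.out_eq'] at this
      rw [Subtype.ext this]
    · rw [inter_comm]
      exact (card_slopeBlock_inter_lineBlock_le H _ _).trans (hE j').le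
    · exact (card_slopeBlock_inter_lineBlock_le H _ _).trans (hE j).le
    · exact (card_slopeBlock_inter_le H (hdisj (by simpa using hne))).trans Nat.card_pos

end Construction

theorem exists_not_listColorable_of_subgroup {F : Type*} [Field F] [Fintype F]
    (H : Subgroup Fˣ) (hH : 2 * Nat.card H ≤ Fintype.card F) {n : ℕ}
    (hn : Fintype.card F ^ 2 - 1 + 2 * Nat.card H ≤ Nat.card H * n) :
    ∃ L : Fin n → Finset ℕ,
      IsListAssignment (Fintype.card F) (Nat.card H) L ∧ ¬ListColorable L := by
  classical
  obtain ⟨E, hE, hdisj⟩ := exists_pairwise_disjoint_card_eq (m := 2) hH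
  have hcount := card_nonzeroOrbits_mul H
  have hQ := natCard_orbitRel_quotient_le H
  refine exists_fin_not_listColorable (isListAssignment_blockAssignment H hE hdisj) ?_ ?_
  · simp only [Fintype.card_sum, Fintype.card_coe, Fintype.card_fin]
    omega
  · simp only [Fintype.card_sum, Fintype.card_coe, Fintype.card_fin]
    refine Nat.le_of_mul_le_mul_left ?_ (Nat.card_pos (α := H))
    linarith

theorem chi_list_exact_general (q c n : ℕ)
    (hq : IsPrimePow q) (hlt : c < q - 1) (hdvd : c ∣ q - 1)
    (hlow : q ^ 2 - 1 + 2 * c ≤ c * n)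
    (hhigh : (c : ℤ) * (c + 1) * n ≤ (c + 1) * q ^ 2 + (c + 3) * q - 2 * (c - 1)) :
    chiListKn n c = q + 1 := by
  classical
  obtain ⟨F, _, _, rfl⟩ := exists_field_card_eq hq
  obtain ⟨H, rfl⟩ := IsCyclic.exists_subgroup_natCard_eq (G := Fˣ) (d := c)
    (by rwa [Nat.card_eq_fintype_card, Fintype.card_units])
  have h2c : 2 * Nat.card H ≤ Fintype.card F := by
    have : ¬Fintype.card F - 1 < 2 * Nat.card H := fun h =>
      hlt.ne' (Nat.eq_of_dvd_of_lt_two_mul (by omega) hdvd h)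
    omega
  exact chiListKn_eq_succ (fun L hL => listColorable_of_card_le hL (by simpa using hhigh))
    (exists_not_listColorable_of_subgroup H h2c hlow)

/-- Main theorem, part (ii): if `q` is a prime power, `c < q − 1` and `c ∣ q − 1`,
then `χ_l(K_n, c) = q + 1` for all `n` with
`(q² − 1)/c + 2 ≤ n` and `c(c+1)·n ≤ (c+1)q² + (c+3)q − 2(c−1)`. -/
theorem chi_list_exact (q c n : ℕ)
    (hq : IsPrimePow q) (hc : 0 < c) (hlt : c < q - 1) (hdvd : c ∣ q - 1)
    (hlow : q ^ 2 - 1 + 2 * c ≤ c * n)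
    (hhigh : (c : ℤ) * (c + 1) * n ≤ (c + 1) * q ^ 2 + (c + 3) * q - 2 * (c - 1)) :
    chiListKn n c = q + 1 :=
  chi_list_exact_general q c n hq hlt hdvd hlow hhigh
end

section
/- Füredi's construction: Let q be a prime power and let c be a positive integer with c < q − 1 and c dividing q − 1. Then there exists a q-uniform hypergraph with exactly (q² − 1)/c vertices and exactly (q² − 1)/c distinct edges such that every two distinct edges intersect in at most c vertices. Concretely: there is a finite type V with |V| = (q² − 1)/c and a Finset E of Finsets of V with |E| = (q² − 1)/c, such that every e ∈ E has |e| = q and |e ∩ e'| ≤ c for all distinct e, e' ∈ E. -/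
/-!
Take `K = 𝔽_{q²}`, let `H ≤ Kˣ` be the group of `c`-th roots of unity, which lies in `𝔽_q^×`
because `c ∣ q - 1`, and let `L = {x | x ^ q - x = d}` for some `d ≠ 0`: an affine `𝔽_q`-line
not through `0`. The vertices are the cosets `Kˣ ⧸ H` and the edges the images of the
translates `g • L`. Elements of `H` are fixed by `x ↦ x ^ q`, so `h • L` is the line of `h * d`
and `H` acts freely on `L`; hence every edge has `q` vertices. For `w ≠ 1` the sets `w • L`
and `L` share at most one point, so two distinct edges share at most one vertex per element
of `H`, that is, at most `c` vertices.
-/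

open Finset Polynomial

lemma card_le_natDegree_of_isRoot {R : Type*} [CommRing R] [IsDomain R] {f : R[X]} (hf : f ≠ 0)
    {s : Finset R} (hs : ∀ x ∈ s, f.IsRoot x) : #s ≤ f.natDegree :=
  card_le_degree_of_subset_roots fun x hx => (mem_roots hf).mpr (hs x hx)

lemma eq_one_of_pow_sub_self_eq {K : Type*} [Field K] {n : ℕ} {a b w d : K} (hd : d ≠ 0)
    (ha : a ≠ 0) (hab : a ≠ b) (hA : a ^ n - a = d) (hB : b ^ n - b = d)
    (hwA : (w * a) ^ n - w * a = d) (hwB : (w * b) ^ n - w * b = d) : w = 1 := by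
  rw [mul_pow] at hwA hwB
  have key : (w ^ n - 1) * (d * (b - a)) = 0 := by
    linear_combination
      b * (hwA - hA) - a * (hwB - hB) - (w ^ n - 1) * b * hA + (w ^ n - 1) * a * hB
  rcases mul_eq_zero.mp key with hwn | hdab
  · have : (w - 1) * a = 0 := by linear_combination hA - hwA + a ^ n * hwn
    exact sub_eq_zero.mp ((mul_eq_zero.mp this).resolve_right ha)
  · exact absurd (sub_eq_zero.mp ((mul_eq_zero.mp hdab).resolve_left hd)).symm hab

lemma pow_eq_self_of_mem_rootsOfUnity {M : Type*} [CommMonoid M] {c q : ℕ} (hq : q ≠ 0)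
    (hc : c ∣ q - 1) {h : Mˣ} (hh : h ∈ rootsOfUnity c M) : h ^ q = h := by
  obtain ⟨k, hk⟩ := hc
  rw [← Nat.sub_add_cancel (Nat.one_le_iff_ne_zero.mpr hq), pow_succ, hk, pow_mul,
    (mem_rootsOfUnity c h).mp hh, one_pow, one_mul]

lemma FiniteField.natCard_rootsOfUnity {K : Type*} [Field K] [Fintype K] {c : ℕ} [NeZero c]
    (hc : c ∣ Fintype.card K - 1) : Nat.card (rootsOfUnity c K) = c := by
  obtain ⟨g, hg⟩ := IsCyclic.exists_ofOrder_eq_natCard (α := Kˣ)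
  rw [Nat.card_units, Nat.card_eq_fintype_card] at hg
  obtain ⟨k, hk⟩ := hc
  have hpos : 0 < orderOf g := orderOf_pos g
  exact ((IsPrimitiveRoot.orderOf g).pow hpos (by rw [hg, hk, mul_comm])).card_rootsOfUnity'

lemma FiniteField.natCard_units_quotient_rootsOfUnity {K : Type*} [Field K] [Fintype K] {c : ℕ}
    [NeZero c] (hc : c ∣ Fintype.card K - 1) :
    Nat.card (Kˣ ⧸ rootsOfUnity c K) = (Fintype.card K - 1) / c := by
  have h := Subgroup.card_eq_card_quotient_mul_card_subgroup (rootsOfUnity c K)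
  rw [FiniteField.natCard_rootsOfUnity hc, Nat.card_units, Nat.card_eq_fintype_card] at h
  rw [h, Nat.mul_div_cancel _ (Nat.pos_of_ne_zero (NeZero.ne c))]

section QuotientTranslate

variable {G : Type*} [CommGroup G] (H : Subgroup G) [DecidableEq (G ⧸ H)] (L : Finset G)

def quotientTranslate (g : G) : Finset (G ⧸ H) :=
  L.image fun x => ((g * x : G) : G ⧸ H)

variable {H L}

lemma card_quotientTranslate (hfree : ∀ h ∈ H, ∀ x ∈ L, h * x ∈ L → h = 1) (g : G) :
    #(quotientTranslate H L g) = #L := by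
  refine card_image_of_injOn fun x hx y hy hxy => ?_
  have hxy : x⁻¹ * y ∈ H := by simpa [mul_assoc] using QuotientGroup.eq.mp hxy
  exact inv_mul_eq_one.mp (hfree _ hxy x hx (by simpa using hy))

lemma card_quotientTranslate_inter_le [Fintype G] [DecidableEq G]
    (hmeet : ∀ w : G, w ≠ 1 → #{x ∈ L | w * x ∈ L} ≤ 1) {g g' : G} (hg : g'⁻¹ * g ∉ H) :
    #(quotientTranslate H L g ∩ quotientTranslate H L g') ≤ Nat.card H := by
  classical
  let T : H → Finset G := fun h => {x ∈ L | g'⁻¹ * g * h * x ∈ L}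
  have hT : ∀ h ∈ (univ : Finset H), #(T h) ≤ 1 := fun h _ =>
    hmeet _ fun h1 => hg (by rw [mul_eq_one_iff_eq_inv.mp h1]; exact H.inv_mem h.2)
  have hsub : quotientTranslate H L g ∩ quotientTranslate H L g' ⊆
      (univ.biUnion T).image fun x => ((g * x : G) : G ⧸ H) := by
    intro v hv
    obtain ⟨x, hx, rfl⟩ := mem_image.mp (mem_inter.mp hv).1
    obtain ⟨y, hy, hyx⟩ := mem_image.mp (mem_inter.mp hv).2
    set h := (g * x)⁻¹ * (g' * y)
    have hh : h ∈ H := QuotientGroup.eq.mp hyx.symm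
    have hy' : g'⁻¹ * g * h * x = y :=
      calc g'⁻¹ * g * h * x = g'⁻¹ * (g * x * h) := by ac_rfl
        _ = y := by rw [mul_inv_cancel_left, inv_mul_cancel_left]
    exact mem_image.mpr
      ⟨x, mem_biUnion.mpr ⟨⟨h, hh⟩, mem_univ _, mem_filter.mpr ⟨hx, hy' ▸ hy⟩⟩, rfl⟩
  calc #(quotientTranslate H L g ∩ quotientTranslate H L g')
      ≤ #((univ.biUnion T).image fun x => ((g * x : G) : G ⧸ H)) := card_le_card hsub
    _ ≤ #(univ.biUnion T) := card_image_le
    _ ≤ #(univ : Finset H) * 1 := card_biUnion_le_card_mul _ _ _ hT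
    _ = Nat.card H := by simp [Nat.card_eq_fintype_card]

theorem exists_quotientTranslate_family [Fintype G] [DecidableEq G]
    (hfree : ∀ h ∈ H, ∀ x ∈ L, h * x ∈ L → h = 1)
    (hmeet : ∀ w : G, w ≠ 1 → #{x ∈ L | w * x ∈ L} ≤ 1) (hlt : Nat.card H < #L) :
    ∃ E : Finset (Finset (G ⧸ H)), #E = Nat.card (G ⧸ H) ∧ (∀ e ∈ E, #e = #L) ∧
      ∀ e ∈ E, ∀ e' ∈ E, e ≠ e' → #(e ∩ e') ≤ Nat.card H := by
  classical
  let edge : G ⧸ H → Finset (G ⧸ H) := fun v => quotientTranslate H L v.out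
  have hinter : ∀ v v', v ≠ v' → #(edge v ∩ edge v') ≤ Nat.card H := fun v v' hne =>
    card_quotientTranslate_inter_le hmeet fun hmem => hne <| by
      rw [← QuotientGroup.out_eq' v, ← QuotientGroup.out_eq' v']
      exact (QuotientGroup.eq.mpr hmem).symm
  have hinj : Function.Injective edge := fun v v' heq => by
    by_contra hne
    have := hinter v v' hne
    rw [heq, inter_self, card_quotientTranslate hfree] at this
    omega
  refine ⟨univ.image edge, ?_, ?_, ?_⟩
  · rw [card_image_of_injective _ hinj, card_univ, Nat.card_eq_fintype_card]
  · simp only [mem_image, mem_univ, true_and, forall_exists_index, forall_apply_eq_imp_iff]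
    exact fun v => card_quotientTranslate hfree _
  · simp only [mem_image, mem_univ, true_and, forall_exists_index, forall_apply_eq_imp_iff]
    exact fun v v' hne => hinter v v' fun h => hne (congrArg edge h)

end QuotientTranslate

section ArtinSchreier

variable (K : Type*) [Field K] (p m : ℕ) [ExpChar K p]

def artinSchreier : K →+ K :=
  (iterateFrobenius K p m).toAddMonoidHom - AddMonoidHom.id K

@[simp]
lemma artinSchreier_apply (x : K) : artinSchreier K p m x = x ^ p ^ m - x := rfl

variable {K p m} [Fintype K] [DecidableEq K] [Fact p.Prime]

lemma card_ker_artinSchreier_le (hm : m ≠ 0) : #{x | artinSchreier K p m x = 0} ≤ p ^ m := by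
  have hp : 1 < p := (Fact.out : p.Prime).one_lt
  have hdeg := FiniteField.X_pow_card_pow_sub_X_natDegree_eq K hm hp
  rw [← hdeg]
  refine card_le_natDegree_of_isRoot (FiniteField.X_pow_card_pow_sub_X_ne_zero K hm hp)
    fun x hx => ?_
  simpa using (mem_filter.mp hx).2

-- Since `x ^ q ^ 2 = x`, every value `y = x ^ q - x` is a root of `X ^ q + X`.
lemma card_range_artinSchreier_le (hm : m ≠ 0) (hK : Fintype.card K = (p ^ m) ^ 2) :
    #(univ.image (artinSchreier K p m)) ≤ p ^ m := by
  have hp : 1 < p := (Fact.out : p.Prime).one_lt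
  have hq : 1 < p ^ m := Nat.one_lt_pow hm hp
  have hdeg : ((X : K[X]) ^ p ^ m + X).natDegree = p ^ m := by
    rw [natDegree_add_eq_left_of_natDegree_lt] <;> simp [hq]
  rw [← hdeg]
  refine card_le_natDegree_of_isRoot (fun h => by simp [h] at hdeg; omega) fun y hy => ?_
  obtain ⟨x, -, rfl⟩ := mem_image.mp hy
  have hx : (x ^ p ^ m) ^ p ^ m = x := by
    rw [← pow_mul, ← sq, ← hK, FiniteField.pow_card]
  simp [sub_pow_expChar_pow, hx]

lemma card_ker_artinSchreier (hm : m ≠ 0) (hK : Fintype.card K = (p ^ m) ^ 2) :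
    #{x | artinSchreier K p m x = 0} = p ^ m := by
  have hfiber : ∀ y ∈ univ.image (artinSchreier K p m),
      #{x ∈ univ | artinSchreier K p m x = y} = #{x | artinSchreier K p m x = 0} := by
    intro y hy
    obtain ⟨x, -, rfl⟩ := mem_image.mp hy
    exact AddMonoidHom.card_fiber_eq_of_mem_range _ ⟨x, rfl⟩ ⟨0, map_zero _⟩
  have hcard : (p ^ m) ^ 2 =
      #(univ.image (artinSchreier K p m)) * #{x | artinSchreier K p m x = 0} := by
    rw [← hK, ← card_univ, card_eq_sum_card_image (artinSchreier K p m), sum_congr rfl hfiber,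
      sum_const, smul_eq_mul]
  have hker := card_ker_artinSchreier_le (K := K) (p := p) hm
  have hrange := card_range_artinSchreier_le hm hK
  nlinarith

lemma exists_artinSchreier_ne_zero (hm : m ≠ 0) (hK : Fintype.card K = (p ^ m) ^ 2) :
    ∃ θ : K, artinSchreier K p m θ ≠ 0 := by
  by_contra! h
  have hq : 1 < p ^ m := Nat.one_lt_pow hm (Fact.out : p.Prime).one_lt
  have hker := card_ker_artinSchreier hm hK
  rw [filter_true_of_mem fun x _ => h x, card_univ, hK] at hker
  nlinarith

end ArtinSchreier

section FurediLine

variable {K : Type*} [Field K] [Fintype K] [DecidableEq K]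

/-- For `#K = q²` and `d ≠ 0`: an affine `𝔽_q`-line of `K` avoiding `0`, as a set of units. -/
def furediLine (q : ℕ) (d : K) : Finset Kˣ := {x | (x : K) ^ q - x = d}

@[simp]
lemma mem_furediLine {q : ℕ} {d : K} {x : Kˣ} : x ∈ furediLine q d ↔ (x : K) ^ q - x = d := by
  simp [furediLine]

lemma eq_one_of_mul_mem_furediLine {q : ℕ} {d : K} (hd : d ≠ 0) {h x : Kˣ} (hh : h ^ q = h)
    (hx : x ∈ furediLine q d) (hhx : h * x ∈ furediLine q d) : h = 1 := by
  rw [mem_furediLine] at hx hhx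
  rw [Units.val_mul, mul_pow, ← Units.val_pow_eq_pow_val, hh] at hhx
  have : ((h : K) - 1) * d = 0 := by linear_combination hhx - (h : K) * hx
  exact Units.ext (sub_eq_zero.mp ((mul_eq_zero.mp this).resolve_right hd))

lemma card_furediLine_mul_le {q : ℕ} {d : K} (hd : d ≠ 0) {w : Kˣ} (hw : w ≠ 1) :
    #{x ∈ furediLine q d | w * x ∈ furediLine q d} ≤ 1 := by
  refine card_le_one.mpr fun a ha b hb => by_contra fun hab => hw (Units.ext ?_)
  simp only [mem_filter, mem_furediLine, Units.val_mul] at ha hb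
  exact eq_one_of_pow_sub_self_eq hd a.ne_zero (fun h => hab (Units.ext h)) ha.1 hb.1 ha.2 hb.2

variable {p m : ℕ} [Fact p.Prime] [CharP K p]

lemma card_furediLine (hm : m ≠ 0) (hK : Fintype.card K = (p ^ m) ^ 2) {θ : K}
    (hθ : artinSchreier K p m θ ≠ 0) :
    #(furediLine (p ^ m) (artinSchreier K p m θ)) = p ^ m := by
  have hunits : #(furediLine (p ^ m) (artinSchreier K p m θ)) =
      #{x | artinSchreier K p m x = artinSchreier K p m θ} := by
    refine card_bij (fun x _ => (x : K))
      (fun x hx => mem_filter.mpr ⟨mem_univ _, by simpa using hx⟩)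
      (fun x _ y _ hxy => Units.ext hxy) fun y hy => ?_
    rw [mem_filter] at hy
    have hy0 : y ≠ 0 := by
      rintro rfl
      have hq : p ^ m ≠ 0 := pow_ne_zero m (Fact.out : p.Prime).ne_zero
      exact hθ (by simpa [zero_pow hq] using hy.2.symm)
    exact ⟨Units.mk0 y hy0, by simpa using hy.2, rfl⟩
  rw [hunits, AddMonoidHom.card_fiber_eq_of_mem_range _ ⟨θ, rfl⟩ ⟨0, map_zero _⟩,
    card_ker_artinSchreier hm hK]

end FurediLine

theorem furedi_construction_general (q c : ℕ)
    (hq : IsPrimePow q) (hdvd : c ∣ q - 1) :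
    ∃ (V : Type) (_ : Fintype V) (_ : DecidableEq V) (E : Finset (Finset V)),
      Fintype.card V = (q ^ 2 - 1) / c ∧
      E.card = (q ^ 2 - 1) / c ∧
      (∀ e ∈ E, e.card = q) ∧
      (∀ e ∈ E, ∀ e' ∈ E, e ≠ e' → (e ∩ e').card ≤ c) := by
  classical
  obtain ⟨p, m, hp, hm, rfl⟩ := hq
  have : Fact p.Prime := ⟨hp.nat_prime⟩
  let K := GaloisField p (2 * m)
  let : Fintype K := Fintype.ofFinite K
  have hK : Fintype.card K = (p ^ m) ^ 2 := by
    rw [← Nat.card_eq_fintype_card, GaloisField.card p (2 * m) (by omega), ← pow_mul, mul_comm]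
  have hq1 : 1 < p ^ m := Nat.one_lt_pow hm.ne' hp.nat_prime.one_lt
  have : NeZero c := ⟨ne_zero_of_dvd_ne_zero (by omega) hdvd⟩
  have hcK : c ∣ Fintype.card K - 1 :=
    hK ▸ hdvd.trans (by simpa using Nat.sub_dvd_pow_sub_pow (p ^ m) 1 2)
  have hH := FiniteField.natCard_rootsOfUnity hcK
  obtain ⟨θ, hθ⟩ := exists_artinSchreier_ne_zero (K := K) hm.ne' hK
  have hL := card_furediLine hm.ne' hK hθ
  obtain ⟨E, hE, hedge, hinter⟩ := exists_quotientTranslate_family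
    (fun h hh x hx hhx => eq_one_of_mul_mem_furediLine hθ
      (pow_eq_self_of_mem_rootsOfUnity (by omega) hdvd hh) hx hhx)
    (fun w hw => card_furediLine_mul_le hθ hw)
    (by rw [hH, hL]; have := Nat.le_of_dvd (by omega) hdvd; omega)
  rw [hH] at hinter
  rw [hL] at hedge
  have hV := FiniteField.natCard_units_quotient_rootsOfUnity hcK
  rw [hK] at hV
  exact ⟨Kˣ ⧸ rootsOfUnity c K, inferInstance, inferInstance, E,
    by rw [← Nat.card_eq_fintype_card, hV], by rw [hE, hV], hedge, hinter⟩

/-- Füredi's construction: if `q` is a prime power and `c` is a positive integer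
with `c < q − 1` and `c ∣ q − 1`, then there exists a `q`-uniform hypergraph with
`(q² − 1)/c` vertices and `(q² − 1)/c` edges such that every two distinct edges
intersect in at most `c` vertices. -/
theorem furedi_construction (q c : ℕ)
    (hq : IsPrimePow q) (hc : 0 < c) (hlt : c < q - 1) (hdvd : c ∣ q - 1) :
    ∃ (V : Type) (_ : Fintype V) (_ : DecidableEq V) (E : Finset (Finset V)),
      Fintype.card V = (q ^ 2 - 1) / c ∧
      E.card = (q ^ 2 - 1) / c ∧
      (∀ e ∈ E, e.card = q) ∧
      (∀ e ∈ E, ∀ e' ∈ E, e ≠ e' → (e ∩ e').card ≤ c) :=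
  furedi_construction_general q c hq hdvd
end

section
/- Augmented hypergraph construction: Let q be a prime power and let c be a positive integer with c < q − 1 and c dividing q − 1. Then there exists a q-uniform hypergraph with exactly (q² − 1)/c + 1 vertices and at least (q² − 1)/c + 2 distinct edges such that every two distinct edges intersect in at most c vertices. Concretely: there is a finite type V' with |V'| = (q² − 1)/c + 1 and a Finset E' of Finsets of V' with |E'| ≥ (q² − 1)/c + 2, such that every e ∈ E' has |e| = q and |e ∩ e'| ≤ c for all distinct e, e' ∈ E'. -/
/-!
Let `K` be the field with `q²` elements and `T x = x + x ^ q` its trace to `𝔽_q`. The affine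
`𝔽_q`-lines `L_a = {x | T (a * x) = 1}`, `a ∈ Kˣ`, have `q` points each, and two distinct ones
share at most one point. Let `H ≤ 𝔽_q^×` be the group of `c`-th roots of unity. As
`T (l * x) = l * T x` for `l ∈ 𝔽_q`, a line `L_a` meets every `𝔽_q^×`-orbit at most once, so its
image in `Kˣ/H` has `q` points; the images of `L_a` and `L_b` with `aH ≠ bH` share at most `c`
points, one for each `h ∈ H` from `L_a ∩ L_(b h)`. These are `(q² - 1)/c` edges on `Kˣ/H`.

Add one vertex `∞` (encoded as `none`). The `q + 1` lines through `0` are the elements of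
`Kˣ/𝔽_q^×`; for a set `T` of `c` of them, the image of their union in `Kˣ/H` has
`c · (q - 1)/c = q - 1` points, and together with `∞` it is an edge meeting each `L_a`-edge in
at most `c` points (one per line of `T`). Two such edges built from disjoint sets meet only in `∞`.
-/

open Finset Polynomial

namespace AugmentedHypergraph

open scoped Classical

noncomputable section

theorem card_le_natDegree_of_forall_eval_eq_zero {R : Type*} [CommRing R] [IsDomain R]
    {P : R[X]} (hP : P ≠ 0) {Z : Finset R} (hZ : ∀ x ∈ Z, P.eval x = 0) : #Z ≤ P.natDegree :=
  card_le_degree_of_subset_roots fun x hx => (mem_roots hP).2 (hZ x hx)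

theorem card_filter_mem_mul_card {G G' : Type*} [Group G] [Group G'] [Fintype G] [Fintype G']
    [DecidableEq G'] (f : G →* G') (hf : Function.Surjective f) (T : Finset G') :
    #{g | f g ∈ T} * Fintype.card G' = #T * Fintype.card G := by
  have hfib : ∀ t, #{g | f g = t} = #{g | f g = 1} := fun t =>
    MonoidHom.card_fiber_eq_of_mem_range f (hf t) ⟨1, map_one f⟩
  have hT : #{g | f g ∈ T} = ∑ t ∈ T, #{g | f g = t} := by
    rw [card_eq_sum_card_fiberwise (f := f) (t := T) fun g hg => by simpa using hg]
    refine sum_congr rfl fun t ht => congr_arg card ?_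
    rw [filter_filter]
    exact filter_congr fun g _ => ⟨And.right, fun h => ⟨h ▸ ht, h⟩⟩
  have hG : Fintype.card G = ∑ t, #{g | f g = t} := by
    rw [← card_univ, card_eq_sum_card_fiberwise (f := f) (t := univ) fun g _ => mem_univ _]
  simp only [hT, hG, hfib, sum_const, smul_eq_mul, card_univ]
  ring

theorem two_mul_le_of_dvd_of_lt {c m : ℕ} (hdvd : c ∣ m) (hlt : c < m) : 2 * c ≤ m := by
  obtain ⟨k, rfl⟩ := hdvd
  have hk : 2 ≤ k := by
    by_contra! h
    interval_cases k <;> simp at hlt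
  nlinarith

theorem exists_disjoint_card_eq {α : Type*} [Fintype α] {c : ℕ} (h : 2 * c ≤ Fintype.card α) :
    ∃ T₁ T₂ : Finset α, Disjoint T₁ T₂ ∧ #T₁ = c ∧ #T₂ = c := by
  obtain ⟨T, -, hT⟩ := exists_subset_card_eq (s := (univ : Finset α)) (n := 2 * c)
    (by rwa [card_univ])
  obtain ⟨T₁, hT₁T, hT₁⟩ := exists_subset_card_eq (show c ≤ #T by omega)
  exact ⟨T₁, T \ T₁, disjoint_sdiff, hT₁, by rw [card_sdiff_of_subset hT₁T]; omega⟩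

def PairwiseInterLE {V : Type*} [DecidableEq V] (c : ℕ) (E : Finset (Finset V)) : Prop :=
  ∀ e ∈ E, ∀ e' ∈ E, e ≠ e' → #(e ∩ e') ≤ c

theorem PairwiseInterLE.insert {V : Type*} [DecidableEq V] {c : ℕ} {E : Finset (Finset V)}
    (hE : PairwiseInterLE c E) {P : Finset V} (hP : ∀ e ∈ E, P ≠ e → #(P ∩ e) ≤ c) :
    PairwiseInterLE c (insert P E) := by
  intro e he e' he' hne
  rcases mem_insert.1 he with rfl | hmem <;> rcases mem_insert.1 he' with rfl | hmem'
  · exact absurd rfl hne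
  · exact hP e' hmem' hne
  · rw [inter_comm]; exact hP e hmem hne.symm
  · exact hE e hmem e' hmem' hne

def quotientMapOfDvd {M : Type*} [CommMonoid M] {m n : ℕ} (h : m ∣ n) :
    Mˣ ⧸ rootsOfUnity m M →* Mˣ ⧸ rootsOfUnity n M :=
  QuotientGroup.map _ _ (MonoidHom.id _) (rootsOfUnity_le_of_dvd h)

theorem quotientMapOfDvd_surjective {M : Type*} [CommMonoid M] {m n : ℕ} (h : m ∣ n) :
    Function.Surjective (quotientMapOfDvd (M := M) h) :=
  fun t => by obtain ⟨x, rfl⟩ := QuotientGroup.mk_surjective t; exact ⟨x, rfl⟩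

theorem pow_eq_self_of_mem_rootsOfUnity {M : Type*} [CommMonoid M] {q : ℕ} (hq : q ≠ 0)
    {u : Mˣ} (hu : u ∈ rootsOfUnity (q - 1) M) : (u : M) ^ q = u := by
  rw [mem_rootsOfUnity] at hu
  rw [← Nat.sub_one_add_one hq, pow_succ, ← Units.val_pow_eq_pow_val, hu, Units.val_one, one_mul]

section RelTrace

variable {K : Type*} [Field K] {q : ℕ}

def relTrace (q : ℕ) (x : K) : K := x + x ^ q

theorem relTrace_mul_of_pow_eq_self {l : K} (hl : l ^ q = l) (x : K) :
    relTrace q (l * x) = l * relTrace q x := by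
  simp only [relTrace, mul_pow, hl]; ring

theorem div_pow_eq_self_of_relTrace_eq_zero {a b : K} (ha : relTrace q a = 0)
    (hb : relTrace q b = 0) : (b / a) ^ q = b / a := by
  rw [div_pow, eq_neg_of_add_eq_zero_right ha, eq_neg_of_add_eq_zero_right hb, neg_div_neg_eq]

theorem card_le_of_forall_pow_eq_self (hq : 2 ≤ q) (Z : Finset K) (hZ : ∀ x ∈ Z, x ^ q = x) :
    #Z ≤ q := by
  have hdeg : (X ^ q - X : K[X]).natDegree = q := by
    rw [natDegree_sub_eq_left_of_natDegree_lt] <;> simp; omega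
  refine hdeg ▸ card_le_natDegree_of_forall_eval_eq_zero ?_ fun x hx => ?_
  · exact ne_zero_of_natDegree_gt (hdeg ▸ (by omega : 0 < q))
  · simp [hZ x hx]

theorem card_le_of_forall_relTrace_eq (hq : 2 ≤ q) (w : K) (Z : Finset K)
    (hZ : ∀ x ∈ Z, relTrace q x = w) : #Z ≤ q := by
  have hdeg : (X ^ q + X - C w : K[X]).natDegree = q := by
    rw [natDegree_sub_C, natDegree_add_eq_left_of_natDegree_lt] <;> simp; omega
  refine hdeg ▸ card_le_natDegree_of_forall_eval_eq_zero ?_ fun x hx => ?_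
  · exact ne_zero_of_natDegree_gt (hdeg ▸ (by omega : 0 < q))
  · simp [← hZ x hx, relTrace, add_comm]

end RelTrace

section FiniteField

variable {K : Type*} [Field K] [Fintype K] {q : ℕ}

theorem two_le_of_card_eq_sq (hK : Fintype.card K = q ^ 2) : 2 ≤ q := by
  have h : 1 < q ^ 2 := hK ▸ Fintype.one_lt_card
  by_contra! hq
  interval_cases q <;> simp at h

theorem pow_pow_of_card_eq_sq (hK : Fintype.card K = q ^ 2) (x : K) : (x ^ q) ^ q = x := by
  rw [← pow_mul, ← sq, ← hK, FiniteField.pow_card]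

theorem add_pow_of_card_eq_sq (hK : Fintype.card K = q ^ 2) (x y : K) :
    (x + y) ^ q = x ^ q + y ^ q := by
  obtain ⟨p, hchar⟩ := CharP.exists K
  obtain ⟨n, hp, hn⟩ := FiniteField.card K p
  have := Fact.mk hp
  have hq : q ∣ p ^ (n : ℕ) := hn ▸ hK ▸ dvd_pow_self q two_ne_zero
  obtain ⟨m, -, rfl⟩ := (Nat.dvd_prime_pow hp).1 hq
  exact add_pow_char_pow x y p m

theorem relTrace_add (hK : Fintype.card K = q ^ 2) (x y : K) :
    relTrace q (x + y) = relTrace q x + relTrace q y := by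
  simp only [relTrace, add_pow_of_card_eq_sq hK]; ring

theorem relTrace_sub (hK : Fintype.card K = q ^ 2) (x y : K) :
    relTrace q (x - y) = relTrace q x - relTrace q y := by
  rw [eq_sub_iff_add_eq, ← relTrace_add hK, sub_add_cancel]

theorem relTrace_pow (hK : Fintype.card K = q ^ 2) (x : K) :
    relTrace q x ^ q = relTrace q x := by
  simp only [relTrace, add_pow_of_card_eq_sq hK, pow_pow_of_card_eq_sq hK]; ring

/-- The `q²` elements lie in the fibres over the at most `q` values `w = w ^ q`, and each fibre
has at most `q` elements, so each has exactly `q`. -/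
theorem card_relTrace_eq (hK : Fintype.card K = q ^ 2) {w : K} (hw : w ^ q = w) :
    #{x : K | relTrace q x = w} = q := by
  have hq := two_le_of_card_eq_sq hK
  have hle : ∀ w : K, #{x : K | relTrace q x = w} ≤ q := fun w =>
    card_le_of_forall_relTrace_eq hq w _ fun x hx => (mem_filter.1 hx).2
  have hmaps : ((univ : Finset K) : Set K).MapsTo (relTrace q)
      ({w : K | w ^ q = w} : Finset K) := by
    simp [Set.MapsTo, relTrace_pow hK]
  have hsum : ∑ w ∈ {w : K | w ^ q = w}, #{x : K | relTrace q x = w} =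
      ∑ w ∈ {w : K | w ^ q = w}, q := by
    refine le_antisymm (sum_le_sum fun w _ => hle w) ?_
    calc ∑ w ∈ {w : K | w ^ q = w}, q = #{w : K | w ^ q = w} * q := by
          rw [sum_const, smul_eq_mul]
      _ ≤ q * q := Nat.mul_le_mul_right _
          (card_le_of_forall_pow_eq_self hq _ fun x hx => (mem_filter.1 hx).2)
      _ = #(univ : Finset K) := by rw [card_univ, hK, sq]
      _ = _ := card_eq_sum_card_fiberwise hmaps
  exact (sum_eq_sum_iff_of_le fun w _ => hle w).1 hsum w (by simpa using hw)

theorem card_filter_coe_units {P : K → Prop} (h0 : ¬ P 0) :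
    #{u : Kˣ | P u} = #{x : K | P x} := by
  rw [← card_map ⟨Units.val, Units.val_injective⟩]
  congr 1
  ext x
  simp only [mem_map, mem_filter, mem_univ, true_and, Function.Embedding.coeFn_mk]
  constructor
  · rintro ⟨u, hu, rfl⟩; exact hu
  · intro hx
    exact ⟨Units.mk0 x (by rintro rfl; exact h0 hx), hx, rfl⟩

theorem card_rootsOfUnity_of_dvd {n : ℕ} [NeZero n] (hn : n ∣ Fintype.card Kˣ) :
    Nat.card (rootsOfUnity n K) = n := by
  obtain ⟨g, hg⟩ := IsCyclic.exists_ofOrder_eq_natCard (α := Kˣ)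
  rw [Nat.card_eq_fintype_card] at hg
  have hord : orderOf (g ^ (orderOf g / n)) = n :=
    orderOf_pow_orderOf_div (hg ▸ Fintype.card_ne_zero) (hg ▸ hn)
  exact (hord ▸ IsPrimitiveRoot.orderOf _).card_rootsOfUnity'

theorem card_units_quotient_mul (hK : Fintype.card K = q ^ 2) {n : ℕ} [NeZero n]
    (hn : n ∣ q - 1) : Fintype.card (Kˣ ⧸ rootsOfUnity n K) * n = q ^ 2 - 1 := by
  have hn' : n ∣ Fintype.card Kˣ := by
    rw [Fintype.card_units, hK]; exact hn.trans (Nat.sub_one_dvd_pow_sub_one q 2)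
  have h := Subgroup.card_eq_card_quotient_mul_card_subgroup (rootsOfUnity n K)
  rwa [card_rootsOfUnity_of_dvd hn', Nat.card_eq_fintype_card, Nat.card_eq_fintype_card,
    Fintype.card_units, hK, eq_comm] at h

theorem card_units_quotient (hK : Fintype.card K = q ^ 2) {n : ℕ} [NeZero n] (hn : n ∣ q - 1) :
    Fintype.card (Kˣ ⧸ rootsOfUnity n K) = (q ^ 2 - 1) / n := by
  rw [← card_units_quotient_mul hK hn, Nat.mul_div_cancel _ (NeZero.pos n)]

theorem card_units_quotient_sub_one (hK : Fintype.card K = q ^ 2) :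
    Fintype.card (Kˣ ⧸ rootsOfUnity (q - 1) K) = q + 1 := by
  have : NeZero (q - 1) := ⟨by have := two_le_of_card_eq_sq hK; omega⟩
  refine Nat.eq_of_mul_eq_mul_right (NeZero.pos (q - 1)) ?_
  rw [card_units_quotient_mul hK dvd_rfl]
  simpa using Nat.sq_sub_sq q 1

end FiniteField

section Lines

variable {K : Type*} [Field K] [Fintype K] {q : ℕ}

def line (q : ℕ) (a : Kˣ) : Finset Kˣ := {x : Kˣ | relTrace q ((a : K) * x) = 1}

theorem card_line (hK : Fintype.card K = q ^ 2) (a : Kˣ) : #(line q a) = q := by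
  have h0 : relTrace q ((a : K) * 0) ≠ 1 := by
    simp [relTrace, zero_pow (by have := two_le_of_card_eq_sq hK; omega : q ≠ 0)]
  refine (card_filter_coe_units (P := fun x : K => relTrace q (a * x) = 1) h0).trans ?_
  exact (card_equiv (Units.mulLeft a) fun x => by simp).trans (card_relTrace_eq hK (one_pow q))

theorem injOn_mk_line (hq : q ≠ 0) {S : Subgroup Kˣ} (hS : S ≤ rootsOfUnity (q - 1) K)
    (a : Kˣ) : Set.InjOn (QuotientGroup.mk : Kˣ → Kˣ ⧸ S) (line q a) := by
  intro x hx y hy hxy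
  have hl : ((x⁻¹ * y : Kˣ) : K) ^ q = (x⁻¹ * y : Kˣ) :=
    pow_eq_self_of_mem_rootsOfUnity hq (hS (QuotientGroup.eq.1 hxy))
  have hy' : relTrace q ((a : K) * y) = (x⁻¹ * y : Kˣ) * relTrace q ((a : K) * x) := by
    rw [← relTrace_mul_of_pow_eq_self hl]; congr 1; push_cast; field_simp
  simp only [line, mem_coe, mem_filter, mem_univ, true_and] at hx hy
  rw [hx, hy, mul_one, eq_comm, Units.val_eq_one, inv_mul_eq_one] at hy'
  exact hy'

theorem card_line_inter_line_le_one (hK : Fintype.card K = q ^ 2) {a b : Kˣ} (hab : a ≠ b) :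
    #(line q a ∩ line q b) ≤ 1 := by
  refine card_le_one.2 fun x hx y hy => ?_
  simp only [line, mem_inter, mem_filter, mem_univ, true_and] at hx hy
  by_contra hxy
  have hu : (x : K) - y ≠ 0 := sub_ne_zero.2 (Units.val_injective.ne hxy)
  have hau : relTrace q ((a : K) * (x - y)) = 0 := by
    rw [mul_sub, relTrace_sub hK, hx.1, hy.1, sub_self]
  have hbu : relTrace q ((b : K) * (x - y)) = 0 := by
    rw [mul_sub, relTrace_sub hK, hx.2, hy.2, sub_self]
  have hl := div_pow_eq_self_of_relTrace_eq_zero hau hbu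
  rw [mul_div_mul_right _ _ hu] at hl
  have hbx := hx.2
  rw [show (b : K) * x = (b / a : K) * (a * x) by field_simp, relTrace_mul_of_pow_eq_self hl,
    hx.1, mul_one, div_eq_one_iff_eq a.ne_zero, Units.val_inj] at hbx
  exact hab hbx.symm

end Lines

section Edges

variable {K : Type*} [Field K] [Fintype K] {q c : ℕ}

def lineEdge (q c : ℕ) (a : Kˣ) : Finset (Option (Kˣ ⧸ rootsOfUnity c K)) :=
  ((line q a).image (QuotientGroup.mk : Kˣ → Kˣ ⧸ rootsOfUnity c K)).map .some

def pencilEdge (hdvd : c ∣ q - 1) (T : Finset (Kˣ ⧸ rootsOfUnity (q - 1) K)) :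
    Finset (Option (Kˣ ⧸ rootsOfUnity c K)) :=
  insert none (({v | quotientMapOfDvd hdvd v ∈ T} : Finset _).map .some)

def lineEdges (q c : ℕ) : Finset (Finset (Option (Kˣ ⧸ rootsOfUnity c K))) :=
  univ.image fun v : Kˣ ⧸ rootsOfUnity c K => lineEdge q c v.out

theorem none_notMem_lineEdge (a : Kˣ) : none ∉ lineEdge (K := K) q c a := by
  simp [lineEdge]

theorem card_lineEdge (hK : Fintype.card K = q ^ 2) (hdvd : c ∣ q - 1) (a : Kˣ) :
    #(lineEdge q c a) = q := by
  have hq : q ≠ 0 := by have := two_le_of_card_eq_sq hK; omega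
  rw [lineEdge, card_map, card_image_of_injOn (injOn_mk_line hq (rootsOfUnity_le_of_dvd hdvd) a),
    card_line hK]

theorem card_lineEdge_inter_le [NeZero c] (hK : Fintype.card K = q ^ 2) {a b : Kˣ}
    (hab : (a : Kˣ ⧸ rootsOfUnity c K) ≠ b) : #(lineEdge q c a ∩ lineEdge q c b) ≤ c := by
  let H := rootsOfUnity c K
  have hsub : (line q a).image (QuotientGroup.mk : Kˣ → Kˣ ⧸ H) ∩ (line q b).image (↑) ⊆
      ((univ : Finset H).biUnion fun h => line q a ∩ line q (b * h)).image (↑) := by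
    intro v hv
    simp only [mem_inter, mem_image] at hv
    obtain ⟨⟨x, hx, rfl⟩, ⟨y, hy, hyx⟩⟩ := hv
    have hh : x⁻¹ * y ∈ H := QuotientGroup.eq.1 hyx.symm
    refine mem_image.2 ⟨x, mem_biUnion.2 ⟨⟨_, hh⟩, mem_univ _, mem_inter.2 ⟨hx, ?_⟩⟩, rfl⟩
    simp only [line, mem_filter, mem_univ, true_and] at hy ⊢
    convert hy using 2
    push_cast
    field_simp
  have hpiece : ∀ h : H, #(line q a ∩ line q (b * h)) ≤ 1 := by
    refine fun h => card_line_inter_line_le_one hK fun hbh => hab (QuotientGroup.eq.2 ?_)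
    rw [hbh, show (b * h)⁻¹ * b = (h : Kˣ)⁻¹ by group]
    exact H.inv_mem h.2
  calc #(lineEdge q c a ∩ lineEdge q c b)
      ≤ #((univ : Finset H).biUnion fun h => line q a ∩ line q (b * h)) := by
        rw [lineEdge, lineEdge, ← map_inter, card_map]
        exact (card_le_card hsub).trans card_image_le
    _ ≤ ∑ h : H, #(line q a ∩ line q (b * h)) := card_biUnion_le
    _ ≤ ∑ _h : H, 1 := sum_le_sum fun h _ => hpiece h
    _ = Nat.card H := by rw [sum_const, smul_eq_mul, mul_one, card_univ, Nat.card_eq_fintype_card]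
    _ ≤ c := card_rootsOfUnity K c

theorem card_pencilEdge [NeZero c] (hK : Fintype.card K = q ^ 2) (hdvd : c ∣ q - 1)
    {T : Finset (Kˣ ⧸ rootsOfUnity (q - 1) K)} (hT : #T = c) : #(pencilEdge hdvd T) = q := by
  have hpre : #{v | quotientMapOfDvd hdvd v ∈ T} = q - 1 := by
    refine Nat.eq_of_mul_eq_mul_right (by omega : 0 < q + 1) ?_
    calc #{v | quotientMapOfDvd hdvd v ∈ T} * (q + 1)
        = #{v | quotientMapOfDvd hdvd v ∈ T} * Fintype.card (Kˣ ⧸ rootsOfUnity (q - 1) K) := by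
          rw [card_units_quotient_sub_one hK]
      _ = Fintype.card (Kˣ ⧸ rootsOfUnity c K) * c := by
          rw [card_filter_mem_mul_card _ (quotientMapOfDvd_surjective hdvd), hT, mul_comm]
      _ = (q - 1) * (q + 1) := by
          rw [card_units_quotient_mul hK hdvd, mul_comm]
          simpa using Nat.sq_sub_sq q 1
  have hq := two_le_of_card_eq_sq hK
  rw [pencilEdge, card_insert_of_notMem (by simp), card_map]
  rw [hpre]
  omega

theorem card_lineEdge_inter_pencilEdge_le (hK : Fintype.card K = q ^ 2) (hdvd : c ∣ q - 1)
    (a : Kˣ) (T : Finset (Kˣ ⧸ rootsOfUnity (q - 1) K)) :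
    #(lineEdge q c a ∩ pencilEdge hdvd T) ≤ #T := by
  have hq : q ≠ 0 := by have := two_le_of_card_eq_sq hK; omega
  rw [pencilEdge, inter_insert_of_notMem (none_notMem_lineEdge a), lineEdge, ← map_inter,
    card_map]
  refine card_le_card_of_injOn (quotientMapOfDvd hdvd)
    (fun v hv => (mem_filter.1 (mem_inter.1 hv).2).2) ?_
  intro v hv w hw hvw
  obtain ⟨x, hx, rfl⟩ := mem_image.1 (mem_inter.1 hv).1
  obtain ⟨y, hy, rfl⟩ := mem_image.1 (mem_inter.1 hw).1
  rw [injOn_mk_line hq le_rfl a hx hy hvw]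

theorem pencilEdge_inter_pencilEdge (hdvd : c ∣ q - 1)
    {T₁ T₂ : Finset (Kˣ ⧸ rootsOfUnity (q - 1) K)} (hT : Disjoint T₁ T₂) :
    pencilEdge hdvd T₁ ∩ pencilEdge hdvd T₂ = {none} := by
  ext (_ | v)
  · simp [pencilEdge]
  · simpa [pencilEdge] using fun h₁ h₂ => disjoint_left.1 hT h₁ h₂

theorem pairwiseInterLE_lineEdges [NeZero c] (hK : Fintype.card K = q ^ 2) :
    PairwiseInterLE c (lineEdges (K := K) q c) := by
  simp only [PairwiseInterLE, lineEdges, mem_image, mem_univ, true_and]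
  rintro _ ⟨v, rfl⟩ _ ⟨w, rfl⟩ hvw
  refine card_lineEdge_inter_le hK ?_
  rw [QuotientGroup.out_eq', QuotientGroup.out_eq']
  rintro rfl
  exact hvw rfl

theorem card_lineEdges [NeZero c] (hK : Fintype.card K = q ^ 2) (hcq : c < q)
    (hdvd : c ∣ q - 1) : #(lineEdges (K := K) q c) = (q ^ 2 - 1) / c := by
  rw [lineEdges, card_image_of_injective, card_univ, card_units_quotient hK hdvd]
  intro v w hvw
  by_contra hne
  have hvw' : (v.out : Kˣ ⧸ rootsOfUnity c K) ≠ w.out := by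
    rwa [QuotientGroup.out_eq', QuotientGroup.out_eq']
  have h := card_lineEdge_inter_le (q := q) hK hvw'
  rw [← show lineEdge q c v.out = lineEdge q c w.out from hvw, inter_self,
    card_lineEdge hK hdvd] at h
  omega

theorem pencilEdge_notMem_lineEdges (hdvd : c ∣ q - 1)
    (T : Finset (Kˣ ⧸ rootsOfUnity (q - 1) K)) : pencilEdge hdvd T ∉ lineEdges q c := by
  intro h
  obtain ⟨v, -, hv⟩ := mem_image.1 h
  exact none_notMem_lineEdge _ (by rw [hv]; exact mem_insert_self _ _)

theorem card_pencilEdge_inter_le_of_mem_lineEdges (hK : Fintype.card K = q ^ 2)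
    (hdvd : c ∣ q - 1) {T : Finset (Kˣ ⧸ rootsOfUnity (q - 1) K)} (hT : #T = c)
    {e : Finset (Option (Kˣ ⧸ rootsOfUnity c K))} (he : e ∈ lineEdges q c) :
    #(pencilEdge hdvd T ∩ e) ≤ c := by
  obtain ⟨v, -, rfl⟩ := mem_image.1 he
  rw [inter_comm]
  exact (card_lineEdge_inter_pencilEdge_le hK hdvd _ T).trans hT.le

theorem exists_edges_of_card_eq_sq (hK : Fintype.card K = q ^ 2) (hc : 0 < c)
    (hlt : c < q - 1) (hdvd : c ∣ q - 1) :
    Fintype.card (Option (Kˣ ⧸ rootsOfUnity c K)) = (q ^ 2 - 1) / c + 1 ∧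
    ∃ E : Finset (Finset (Option (Kˣ ⧸ rootsOfUnity c K))),
      (q ^ 2 - 1) / c + 2 ≤ #E ∧ (∀ e ∈ E, #e = q) ∧ PairwiseInterLE c E := by
  have : NeZero c := ⟨hc.ne'⟩
  have h2c := two_mul_le_of_dvd_of_lt hdvd hlt
  obtain ⟨T₁, T₂, hT, hT₁, hT₂⟩ := exists_disjoint_card_eq (α := Kˣ ⧸ rootsOfUnity (q - 1) K)
    (c := c) (by rw [card_units_quotient_sub_one hK]; omega)
  have hP₁₂ : #(pencilEdge hdvd T₁ ∩ pencilEdge hdvd T₂) = 1 := by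
    rw [pencilEdge_inter_pencilEdge hdvd hT, card_singleton]
  have hne : pencilEdge hdvd T₁ ≠ pencilEdge hdvd T₂ := fun h => by
    rw [h, inter_self, card_pencilEdge hK hdvd hT₂] at hP₁₂
    omega
  refine ⟨by rw [Fintype.card_option, card_units_quotient hK hdvd],
    insert (pencilEdge hdvd T₁) (insert (pencilEdge hdvd T₂) (lineEdges q c)), ?_, ?_, ?_⟩
  · rw [card_insert_of_notMem, card_insert_of_notMem (pencilEdge_notMem_lineEdges hdvd T₂),
      card_lineEdges hK (by omega) hdvd]
    exact fun h => (mem_insert.1 h).elim hne (pencilEdge_notMem_lineEdges hdvd T₁)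
  · simp only [mem_insert]
    rintro e (rfl | rfl | he)
    · exact card_pencilEdge hK hdvd hT₁
    · exact card_pencilEdge hK hdvd hT₂
    · obtain ⟨v, -, rfl⟩ := mem_image.1 he
      exact card_lineEdge hK hdvd _
  · refine ((pairwiseInterLE_lineEdges hK).insert fun e he _ =>
      card_pencilEdge_inter_le_of_mem_lineEdges hK hdvd hT₂ he).insert ?_
    intro e he _
    rcases mem_insert.1 he with rfl | he
    · omega
    · exact card_pencilEdge_inter_le_of_mem_lineEdges hK hdvd hT₁ he

end Edges

end

end AugmentedHypergraph

/-- Augmented hypergraph construction: if `q` is a prime power and `c` is a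
positive integer with `c < q − 1` and `c ∣ q − 1`, then there exists a `q`-uniform
hypergraph with `(q² − 1)/c + 1` vertices and at least `(q² − 1)/c + 2` edges such
that every two distinct edges intersect in at most `c` vertices. -/
theorem augmented_hypergraph (q c : ℕ)
    (hq : IsPrimePow q) (hc : 0 < c) (hlt : c < q - 1) (hdvd : c ∣ q - 1) :
    ∃ (V : Type) (_ : Fintype V) (_ : DecidableEq V) (E : Finset (Finset V)),
      Fintype.card V = (q ^ 2 - 1) / c + 1 ∧
      (q ^ 2 - 1) / c + 2 ≤ E.card ∧
      (∀ e ∈ E, e.card = q) ∧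
      (∀ e ∈ E, ∀ e' ∈ E, e ≠ e' → (e ∩ e').card ≤ c) := by
  classical
  obtain ⟨p, n, hp, hn, rfl⟩ := hq
  have := Fact.mk hp.nat_prime
  let K := GaloisField p (2 * n)
  let : Fintype K := Fintype.ofFinite K
  have hK : Fintype.card K = (p ^ n) ^ 2 := by
    rw [← Nat.card_eq_fintype_card, GaloisField.card p (2 * n) (by omega), ← pow_mul, mul_comm]
  obtain ⟨hV, E, hE⟩ := AugmentedHypergraph.exists_edges_of_card_eq_sq hK hc hlt hdvd
  exact ⟨_, _, _, E, hV, hE⟩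
end
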